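/- arXiv:2312.00618 — 7 statements merged into one kernel-verified Lean document; each statement's English description precedes it below -/
import Mathlib

section
/- Let τ₀ ∈ ℝ, let Σ : [τ₀,∞) → Matrix (Fin 3) (Fin 3) ℝ be continuous with Σ(τ) symmetric for each τ, let R : [τ₀,∞) → Matrix (Fin 3) (Fin 3) ℝ be continuous with R(τ) antisymmetric for each τ, and let P : [τ₀,∞) → (Fin 3 → ℝ) be continuously differentiable with P_a'(τ) = −∑_c P_c(τ)·(Σ_{ca}(τ) + δ_{ca} + R_{ca}(τ)) for all a and all τ ≥ τ₀. Then for all τ ≥ τ₀: ∑_a P_a(τ)² ≤ (∑_a P_a(τ₀)²) · exp( ∫_{τ₀}^{τ} (−2 + 2√(∑_{a,b} Σ_{ab}(s)²)) ds ). -/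
/-!
Along a solution, `d/dτ |P|² = -2 |P|² - 2 P·(PΣ) - 2 P·(PR)`. The rotation term vanishes
because `R` is antisymmetric, and by Cauchy–Schwarz `|P·(PΣ)| ≤ |P|² ‖Σ‖_F`, where
`‖Σ‖_F² = ∑ Σ_ab²`. Hence `(|P|²)' ≤ (-2 + 2‖Σ‖_F) |P|²`, and Grönwall's inequality with this
time-dependent rate gives the estimate.
-/

open Real Set Matrix

theorem dotProduct_vecMul_self_eq_zero {ι α : Type*} [Fintype ι] [CommRing α]
    [IsAddTorsionFree α] {A : Matrix ι ι α} (hA : Aᵀ = -A) (v : ι → α) :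
    v ⬝ᵥ (v ᵥ* A) = 0 := by
  refine self_eq_neg.mp ?_
  calc v ⬝ᵥ (v ᵥ* A) = v ⬝ᵥ (Aᵀ *ᵥ v) := by rw [mulVec_transpose]
    _ = -(v ᵥ* A ⬝ᵥ v) := by rw [hA, neg_mulVec, dotProduct_neg, dotProduct_mulVec]
    _ = -(v ⬝ᵥ (v ᵥ* A)) := by rw [dotProduct_comm]

theorem sq_dotProduct_vecMul_le {m n : Type*} [Fintype m] [Fintype n]
    (u : n → ℝ) (v : m → ℝ) (A : Matrix m n ℝ) :
    (u ⬝ᵥ (v ᵥ* A)) ^ 2 ≤ (u ⬝ᵥ u) * (v ⬝ᵥ v) * ∑ i, ∑ j, A i j ^ 2 := by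
  have hvA : v ᵥ* A ⬝ᵥ v ᵥ* A ≤ (v ⬝ᵥ v) * ∑ i, ∑ j, A i j ^ 2 := by
    calc v ᵥ* A ⬝ᵥ v ᵥ* A = ∑ j, (∑ i, v i * A i j) ^ 2 := by
          simp only [dotProduct, vecMul, sq]
      _ ≤ ∑ j, (v ⬝ᵥ v) * ∑ i, A i j ^ 2 := by
          gcongr with j
          simpa only [dotProduct, sq] using Finset.sum_mul_sq_le_sq_mul_sq _ v (A · j)
      _ = (v ⬝ᵥ v) * ∑ i, ∑ j, A i j ^ 2 := by rw [← Finset.mul_sum, Finset.sum_comm]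
  calc (u ⬝ᵥ (v ᵥ* A)) ^ 2 ≤ (u ⬝ᵥ u) * (v ᵥ* A ⬝ᵥ v ᵥ* A) := by
        simpa only [dotProduct, sq] using Finset.sum_mul_sq_le_sq_mul_sq _ u (v ᵥ* A)
    _ ≤ (u ⬝ᵥ u) * ((v ⬝ᵥ v) * ∑ i, ∑ j, A i j ^ 2) := by
        gcongr
        exact dotProduct_self_star_nonneg u
    _ = (u ⬝ᵥ u) * (v ⬝ᵥ v) * ∑ i, ∑ j, A i j ^ 2 := by ring

theorem neg_dotProduct_vecMul_self_le {n : Type*} [Fintype n] (v : n → ℝ) (A : Matrix n n ℝ) :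
    -(v ⬝ᵥ (v ᵥ* A)) ≤ (v ⬝ᵥ v) * √(∑ i, ∑ j, A i j ^ 2) := by
  have hv : 0 ≤ v ⬝ᵥ v := dotProduct_self_star_nonneg v
  refine neg_le.mp (abs_le_of_sq_le_sq' ?_ (mul_nonneg hv (sqrt_nonneg _))).1
  rw [mul_pow, sq_sqrt (by positivity), sq (v ⬝ᵥ v)]
  exact sq_dotProduct_vecMul_le v v A

theorem hasDerivAt_dotProduct_self {ι : Type*} [Fintype ι] {P : ℝ → ι → ℝ} {P' : ι → ℝ}
    {t : ℝ} (hP : ∀ i, HasDerivAt (fun s => P s i) (P' i) t) :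
    HasDerivAt (fun s => P s ⬝ᵥ P s) (2 * (P t ⬝ᵥ P')) t := by
  refine (HasDerivAt.fun_sum (u := Finset.univ) fun i _ => (hP i).mul (hP i)).congr_deriv ?_
  simp only [dotProduct, Finset.mul_sum]
  exact Finset.sum_congr rfl fun i _ => by ring

theorem le_mul_exp_integral_of_hasDerivAt_le {f f' g : ℝ → ℝ} {a b : ℝ} (hab : a ≤ b)
    (hf : ContinuousOn f (Icc a b)) (hg : ContinuousOn g (Icc a b))
    (hf' : ∀ x ∈ Ioo a b, HasDerivAt f (f' x) x) (hle : ∀ x ∈ Ioo a b, f' x ≤ g x * f x) :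
    f b ≤ f a * exp (∫ s in a..b, g s) := by
  set G : ℝ → ℝ := fun x => ∫ s in a..x, g s
  have hG : ContinuousOn G (Icc a b) := by
    rw [← uIcc_of_le hab] at hg ⊢
    exact intervalIntegral.continuousOn_primitive_interval
      (hg.integrableOn_compact isCompact_uIcc)
  have hG' : ∀ x ∈ Ioo a b, HasDerivAt G (g x) x := fun x hx =>
    intervalIntegral.integral_hasDerivAt_right
      ((hg.mono (Icc_subset_Icc_right hx.2.le)).intervalIntegrable_of_Icc hx.1.le)
      ((hg.mono Ioo_subset_Icc_self).stronglyMeasurableAtFilter isOpen_Ioo x hx)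
      (hg.continuousAt (Icc_mem_nhds hx.1 hx.2))
  have hanti : AntitoneOn (fun x => f x * exp (-G x)) (Icc a b) := by
    have hderiv : ∀ x ∈ Ioo a b, HasDerivAt (fun x => f x * exp (-G x))
        (f' x * exp (-G x) + f x * (exp (-G x) * -g x)) x := fun x hx =>
      (hf' x hx).mul (hG' x hx).neg.exp
    refine antitoneOn_of_deriv_nonpos (convex_Icc a b) (hf.mul hG.neg.rexp) ?_ ?_ <;>
      rw [interior_Icc]
    · exact fun x hx => (hderiv x hx).differentiableAt.differentiableWithinAt
    · intro x hx
      rw [(hderiv x hx).deriv]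
      nlinarith [hle x hx, exp_pos (-G x)]
  have hb := hanti (left_mem_Icc.2 hab) (right_mem_Icc.2 hab) hab
  simp only [G, intervalIntegral.integral_same, neg_zero, exp_zero, mul_one] at hb
  rwa [exp_neg, ← div_eq_mul_inv, div_le_iff₀ (exp_pos _)] at hb

theorem squared_momenta_estimate_general
    (τ₀ : ℝ)
    (Sig R : ℝ → Matrix (Fin 3) (Fin 3) ℝ)
    (hSig_cont : ContinuousOn Sig (Ici τ₀))
    (hR_antisymm : ∀ τ ∈ Ici τ₀, (R τ).transpose = -(R τ))
    (P : ℝ → Fin 3 → ℝ)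
    (hP : ∀ τ ∈ Ici τ₀, ∀ a, HasDerivAt (fun s => P s a)
      (-(∑ c, P τ c *
        (Sig τ c a + (if c = a then (1 : ℝ) else 0) + R τ c a))) τ) :
    ∀ τ ∈ Ici τ₀,
      ∑ a, (P τ a) ^ 2 ≤
        (∑ a, (P τ₀ a) ^ 2) *
          Real.exp (∫ s in τ₀..τ,
            (-2 + 2 * Real.sqrt (∑ a, ∑ b, (Sig s a b) ^ 2))) := by
  intro τ hτ
  have hP' : ∀ s ∈ Ici τ₀, ∀ a,
      HasDerivAt (fun s => P s a) (-(P s ᵥ* (Sig s + 1 + R s)) a) s := by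
    simpa only [vecMul, dotProduct, Matrix.add_apply, one_apply, Pi.neg_apply] using hP
  have hn : ∀ s ∈ Ici τ₀, HasDerivAt (fun s => P s ⬝ᵥ P s)
      (-2 * (P s ⬝ᵥ P s) - 2 * (P s ⬝ᵥ (P s ᵥ* Sig s))) s := by
    intro s hs
    refine (hasDerivAt_dotProduct_self (P' := -(P s ᵥ* (Sig s + 1 + R s))) (hP' s hs)).congr_deriv
      ?_
    rw [vecMul_add, vecMul_add, vecMul_one, dotProduct_neg, dotProduct_add, dotProduct_add,
      dotProduct_vecMul_self_eq_zero (hR_antisymm s hs)]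
    ring
  have hsq : ∀ v : Fin 3 → ℝ, ∑ a, v a ^ 2 = v ⬝ᵥ v := fun v => by simp only [dotProduct, sq]
  have hIoo : Ioo τ₀ τ ⊆ Ici τ₀ := Ioo_subset_Icc_self.trans Icc_subset_Ici_self
  rw [hsq, hsq]
  refine le_mul_exp_integral_of_hasDerivAt_le hτ
    (fun s hs => (hn s (Icc_subset_Ici_self hs)).continuousAt.continuousWithinAt)
    ((by fun_prop : ContinuousOn _ (Ici τ₀)).mono Icc_subset_Ici_self)
    (fun s hs => hn s (hIoo hs)) fun s _ => ?_
  linarith [neg_dotProduct_vecMul_self_le (P s) (Sig s)]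

/-- Estimate for the squared characteristic momenta in dimensionless time:
if `P_a' = -∑_c P_c (Σ_{ca} + δ_{ca} + R_{ca})` with `Σ` symmetric (the
Hubble-normalised shear) and `R` antisymmetric, then
`∑ P_a(τ)² ≤ ∑ P_a(τ₀)² · exp ∫_{τ₀}^τ (-2 + 2√(Σ_{ab}Σ^{ab}))`. -/
theorem squared_momenta_estimate
    (τ₀ : ℝ)
    (Sig R : ℝ → Matrix (Fin 3) (Fin 3) ℝ)
    (hSig_cont : ContinuousOn Sig (Ici τ₀))
    (hR_cont : ContinuousOn R (Ici τ₀))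
    (hSig_symm : ∀ τ ∈ Ici τ₀, (Sig τ).IsSymm)
    (hR_antisymm : ∀ τ ∈ Ici τ₀, (R τ).transpose = -(R τ))
    (P : ℝ → Fin 3 → ℝ)
    (hP : ∀ τ ∈ Ici τ₀, ∀ a, HasDerivAt (fun s => P s a)
      (-(∑ c, P τ c *
        (Sig τ c a + (if c = a then (1 : ℝ) else 0) + R τ c a))) τ) :
    ∀ τ ∈ Ici τ₀,
      ∑ a, (P τ a) ^ 2 ≤
        (∑ a, (P τ₀ a) ^ 2) *
          Real.exp (∫ s in τ₀..τ,
            (-2 + 2 * Real.sqrt (∑ a, ∑ b, (Sig s a b) ^ 2))) :=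
  squared_momenta_estimate_general τ₀ Sig R hSig_cont hR_antisymm P hP
end

section
/- Consider the Hubble-normalised Bianchi I Einstein–Vlasov–magnetic ODE system (see context). There exist ε₀ > 0 and C > 0 such that for every ε ∈ (0, ε₀], if |B(τ₀)| ≤ ε, |Σ₂₂(τ₀)| ≤ ε, |Σ₃₃(τ₀)| ≤ ε, |Σ₁₂(τ₀)| ≤ ε, |Σ₁₃(τ₀)| ≤ ε, |Σ₂₃(τ₀)| ≤ ε and P̂(τ₀) ≤ ε, then for all τ ≥ τ₀: |B(τ)| ≤ Cε·e^{−(τ−τ₀)/2}; |Σ₁₂(τ)| ≤ Cε·e^{−3(τ−τ₀)/2}; |Σ₁₃(τ)| ≤ Cε·e^{−3(τ−τ₀)/2}; |Σ₂₃(τ)| ≤ Cε·e^{−3(τ−τ₀)/2}; |Σ₂₂(τ) − Σ₃₃(τ)| ≤ Cε·e^{−3(τ−τ₀)/2}; |Σ₂₂(τ) + Σ₃₃(τ)| ≤ Cε·e^{−(τ−τ₀)}; and P̂(τ) ≤ Cε·e^{−2(τ−τ₀)}. -/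
/-!
`V = F + B² + P̂` satisfies `V' ≤ -V/2` while `V` is small: in `(F + B²)'` the quadratic
frame-rotation terms and the magnetic terms cancel, leaving `2(q-2)F + 2(q-1)B² + 2Σ·Π`, and
`q ≈ 1/2`. A barrier argument keeps `V` small, so `V ≤ e^{-(τ-τ₀)/2}` and every component is
`O(e^{-(τ-τ₀)/4})`. Each quantity of the statement then obeys a linear differential inequality
`f' ≤ (-k + c e^{-(τ-τ₀)/4}) f + A e^{-ν(τ-τ₀)}`, whose perturbation is integrable, so an
integrating factor gives `f = O(e^{-min(k,ν)(τ-τ₀)})`. Treating `P̂`, `B²`, the off-diagonal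
shear, `Σ₂₂ - Σ₃₃` and `Σ₂₂ + Σ₃₃` in this order, each source term is bounded by the earlier
estimates.
-/

open Real Set

/-- The Hubble-normalised shear scalar `F = Σ_{ab}Σ^{ab}`, with
`Σ₁₁ = -Σ₂₂ - Σ₃₃`. -/
noncomputable def shearScalar (S22 S33 S12 S13 S23 : ℝ → ℝ) (τ : ℝ) : ℝ :=
  (-(S22 τ) - S33 τ) ^ 2 + (S22 τ) ^ 2 + (S33 τ) ^ 2
    + 2 * ((S12 τ) ^ 2 + (S13 τ) ^ 2 + (S23 τ) ^ 2)

/-- The deceleration parameter `q = 1/2 + F/4 + (s + B²/2)/6`. -/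
noncomputable def decelParam (B S22 S33 S12 S13 S23 s : ℝ → ℝ) (τ : ℝ) : ℝ :=
  1 / 2 + shearScalar S22 S33 S12 S13 S23 τ / 4 + (s τ + (B τ) ^ 2 / 2) / 6

theorem sq_le_sq_of_abs_le {x ε : ℝ} (h : |x| ≤ ε) : x ^ 2 ≤ ε ^ 2 :=
  sq_le_sq.2 (h.trans (le_abs_self ε))

theorem le_on_Ici_of_hasDerivAt_le {f f' g g' : ℝ → ℝ} {a : ℝ}
    (hf : ∀ t ∈ Ici a, HasDerivAt f (f' t) t) (hg : ∀ t ∈ Ici a, HasDerivAt g (g' t) t)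
    (ha : f a ≤ g a) (hfg : ∀ t ∈ Ici a, f' t ≤ g' t) : ∀ t ∈ Ici a, f t ≤ g t := fun _ ht =>
  image_le_of_deriv_right_le_deriv_boundary
    (fun x hx => (hf x hx.1).continuousAt.continuousWithinAt)
    (fun x hx => (hf x hx.1).hasDerivWithinAt) ha
    (fun x hx => (hg x hx.1).continuousAt.continuousWithinAt)
    (fun x hx => (hg x hx.1).hasDerivWithinAt) (fun x hx => hfg x hx.1) (right_mem_Icc.2 ht)

theorem le_on_Ici_of_hasDerivAt_neg_of_eq {f f' : ℝ → ℝ} {a c : ℝ}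
    (hf : ∀ t ∈ Ici a, HasDerivAt f (f' t) t) (ha : f a ≤ c)
    (hc : ∀ t ∈ Ici a, f t = c → f' t < 0) : ∀ t ∈ Ici a, f t ≤ c := fun _ ht =>
  image_le_of_deriv_right_lt_deriv_boundary
    (fun x hx => (hf x hx.1).continuousAt.continuousWithinAt)
    (fun x hx => (hf x hx.1).hasDerivWithinAt) (B := fun _ => c) ha
    (fun _ => hasDerivAt_const _ c) (fun x hx => hc x hx.1) (right_mem_Icc.2 ht)

/-- An integrating factor for the coefficient `-k + c e^{-β s}`. -/
noncomputable def decayWeight (k c β s : ℝ) : ℝ := exp (k * s - c / β * (1 - exp (-β * s)))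

theorem hasDerivAt_decayWeight (k c : ℝ) {β : ℝ} (hβ : β ≠ 0) (s : ℝ) :
    HasDerivAt (decayWeight k c β) ((k - c * exp (-β * s)) * decayWeight k c β s) s := by
  have h : HasDerivAt (fun s => k * s - c / β * (1 - exp (-β * s)))
      (k - c * exp (-β * s)) s := by
    refine (((hasDerivAt_id s).const_mul k).sub ((((hasDerivAt_id s).const_mul (-β)).exp.const_sub
      1).const_mul (c / β))).congr_deriv ?_
    simp only [id, mul_one]
    field_simp
  exact h.exp.congr_deriv (mul_comm _ _)

theorem exp_sub_le_decayWeight {k c β s : ℝ} (hc : 0 ≤ c) (hβ : 0 < β) :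
    exp (k * s - c / β) ≤ decayWeight k c β s := by
  refine exp_le_exp.2 (sub_le_sub_left ?_ _)
  have : 0 ≤ exp (-β * s) := (exp_pos _).le
  nlinarith [div_nonneg hc hβ.le]

theorem decayWeight_le_exp {k c β s : ℝ} (hc : 0 ≤ c) (hβ : 0 < β) (hs : 0 ≤ s) :
    decayWeight k c β s ≤ exp (k * s) := by
  refine exp_le_exp.2 (sub_le_self _ (mul_nonneg (div_nonneg hc hβ.le) ?_))
  rw [sub_nonneg, exp_le_one_iff]
  nlinarith

section PerturbedLinear

variable {f f' : ℝ → ℝ} {a k c β A ν : ℝ}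

theorem mul_decayWeight_le (hf : ∀ t ∈ Ici a, HasDerivAt f (f' t) t)
    (hf' : ∀ t ∈ Ici a, f' t ≤ (-k + c * exp (-β * (t - a))) * f t + A * exp (-ν * (t - a)))
    (hc : 0 ≤ c) (hβ : 0 < β) (hA : 0 ≤ A) (hνk : ν ≠ k) :
    ∀ t ∈ Ici a, f t * decayWeight k c β (t - a)
      ≤ f a + A * (exp ((k - ν) * (t - a)) - 1) / (k - ν) := by
  have hkν : k - ν ≠ 0 := sub_ne_zero.2 hνk.symm
  refine le_on_Ici_of_hasDerivAt_le (fun t ht => (hf t ht).mul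
      ((hasDerivAt_decayWeight k c hβ.ne' (t - a)).comp_sub_const t a))
    (fun t _ => ((((hasDerivAt_id t).sub_const a).const_mul (k - ν)).exp.sub_const 1).const_mul
      A |>.div_const (k - ν) |>.const_add (f a)) (by simp [decayWeight]) fun t ht => ?_
  have ht' : 0 ≤ t - a := sub_nonneg.2 ht
  have hw := decayWeight_le_exp (k := k) hc hβ ht'
  have hw0 : 0 < decayWeight k c β (t - a) := exp_pos _
  have hsrc : A * exp (-ν * (t - a)) * decayWeight k c β (t - a) ≤ A * exp ((k - ν) * (t - a)) := by
    calc A * exp (-ν * (t - a)) * decayWeight k c β (t - a)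
        ≤ A * exp (-ν * (t - a)) * exp (k * (t - a)) := by gcongr
      _ = A * exp ((k - ν) * (t - a)) := by rw [mul_assoc, ← exp_add]; ring_nf
  have := mul_le_mul_of_nonneg_right (hf' t ht) hw0.le
  rw [id, mul_one, mul_div_assoc, mul_div_cancel_right₀ _ hkν]
  linarith

theorem le_exp_mul_of_hasDerivAt_le (hf : ∀ t ∈ Ici a, HasDerivAt f (f' t) t)
    (hf' : ∀ t ∈ Ici a, f' t ≤ (-k + c * exp (-β * (t - a))) * f t + A * exp (-ν * (t - a)))
    (hc : 0 ≤ c) (hβ : 0 < β) (hA : 0 ≤ A) (hνk : ν ≠ k) (hfa : 0 ≤ f a) {t : ℝ} (ht : t ∈ Ici a) :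
    f t ≤ exp (c / β) * (f a + A * (exp ((k - ν) * (t - a)) - 1) / (k - ν))
      * exp (-k * (t - a)) := by
  set R := f a + A * (exp ((k - ν) * (t - a)) - 1) / (k - ν)
  have ht' : 0 ≤ t - a := sub_nonneg.2 ht
  have hR : 0 ≤ R := by
    refine add_nonneg hfa ?_
    rw [mul_div_assoc]
    refine mul_nonneg hA ?_
    rcases lt_or_gt_of_ne (sub_ne_zero.2 hνk.symm) with hneg | hpos
    · exact div_nonneg_of_nonpos (by simp only [sub_nonpos, exp_le_one_iff]; nlinarith) hneg.le
    · exact div_nonneg (by simp only [sub_nonneg, one_le_exp_iff]; positivity) hpos.le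
  have hlow := exp_sub_le_decayWeight (k := k) (s := t - a) hc hβ
  have hw0 : 0 < decayWeight k c β (t - a) := exp_pos _
  calc f t = f t * decayWeight k c β (t - a) / decayWeight k c β (t - a) := by field_simp
    _ ≤ R / decayWeight k c β (t - a) := by
        gcongr; exact mul_decayWeight_le hf hf' hc hβ hA hνk t ht
    _ ≤ R / exp (k * (t - a) - c / β) := by gcongr
    _ = exp (c / β) * R * exp (-k * (t - a)) := by
        rw [div_eq_mul_inv, ← exp_neg, show -(k * (t - a) - c / β) = c / β + -k * (t - a) by ring,
          exp_add]
        ring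

theorem le_exp_mul_of_hasDerivAt_le_of_lt (hf : ∀ t ∈ Ici a, HasDerivAt f (f' t) t)
    (hf' : ∀ t ∈ Ici a, f' t ≤ (-k + c * exp (-β * (t - a))) * f t + A * exp (-ν * (t - a)))
    (hc : 0 ≤ c) (hβ : 0 < β) (hA : 0 ≤ A) (hkν : k < ν) (hfa : 0 ≤ f a) {t : ℝ} (ht : t ∈ Ici a) :
    f t ≤ exp (c / β) * (f a + A / (ν - k)) * exp (-k * (t - a)) := by
  refine (le_exp_mul_of_hasDerivAt_le hf hf' hc hβ hA hkν.ne' hfa ht).trans ?_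
  have hE := exp_pos ((k - ν) * (t - a))
  have hsrc : A * (exp ((k - ν) * (t - a)) - 1) / (k - ν) ≤ A / (ν - k) := by
    rw [show A * (exp ((k - ν) * (t - a)) - 1) / (k - ν)
        = A * (1 - exp ((k - ν) * (t - a))) / (ν - k)
      by rw [div_eq_div_iff (sub_ne_zero.2 hkν.ne) (sub_ne_zero.2 hkν.ne')]; ring]
    exact div_le_div_of_nonneg_right (by nlinarith) (sub_pos.2 hkν).le
  exact mul_le_mul_of_nonneg_right (mul_le_mul_of_nonneg_left (by linarith) (exp_pos _).le)
    (exp_pos _).le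

theorem le_exp_mul_of_hasDerivAt_le_of_gt (hf : ∀ t ∈ Ici a, HasDerivAt f (f' t) t)
    (hf' : ∀ t ∈ Ici a, f' t ≤ (-k + c * exp (-β * (t - a))) * f t + A * exp (-ν * (t - a)))
    (hc : 0 ≤ c) (hβ : 0 < β) (hA : 0 ≤ A) (hνk : ν < k) (hfa : 0 ≤ f a) {t : ℝ} (ht : t ∈ Ici a) :
    f t ≤ exp (c / β) * (f a + A / (k - ν)) * exp (-ν * (t - a)) := by
  refine (le_exp_mul_of_hasDerivAt_le hf hf' hc hβ hA hνk.ne hfa ht).trans ?_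
  have hkν : 0 < k - ν := sub_pos.2 hνk
  have hE : 1 ≤ exp ((k - ν) * (t - a)) := one_le_exp (mul_nonneg hkν.le (sub_nonneg.2 ht))
  calc exp (c / β) * (f a + A * (exp ((k - ν) * (t - a)) - 1) / (k - ν)) * exp (-k * (t - a))
      ≤ exp (c / β) * ((f a + A / (k - ν)) * exp ((k - ν) * (t - a))) * exp (-k * (t - a)) := by
        gcongr
        rw [add_mul, div_mul_eq_mul_div, mul_sub_one]
        have : 0 ≤ A / (k - ν) := div_nonneg hA hkν.le
        nlinarith [div_le_div_of_nonneg_right (sub_le_self (A * exp ((k - ν) * (t - a))) hA) hkν.le]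
    _ = exp (c / β) * (f a + A / (k - ν)) * exp (-ν * (t - a)) := by
        rw [← show exp ((k - ν) * (t - a)) * exp (-k * (t - a)) = exp (-ν * (t - a)) by
          rw [← exp_add]; ring_nf]
        ring

theorem le_exp_mul_of_hasDerivAt_le_homogeneous (hf : ∀ t ∈ Ici a, HasDerivAt f (f' t) t)
    (hf' : ∀ t ∈ Ici a, f' t ≤ (-k + c * exp (-β * (t - a))) * f t)
    (hc : 0 ≤ c) (hβ : 0 < β) (hfa : 0 ≤ f a) {t : ℝ} (ht : t ∈ Ici a) :
    f t ≤ exp (c / β) * f a * exp (-k * (t - a)) := by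
  simpa using le_exp_mul_of_hasDerivAt_le_of_lt (A := 0) (ν := k + 1) hf (by simpa using hf') hc hβ
    le_rfl (lt_add_one k) hfa ht

end PerturbedLinear

theorem two_mul_le_of_abs_le_mul_exp {x y M β ν ν' t : ℝ} (hy : |y| ≤ M * exp (-ν * t))
    (hν' : ν' = 2 * ν - β) :
    2 * x * y ≤ exp (-β * t) * x ^ 2 + M ^ 2 * exp (-ν' * t) := by
  have hinv : exp (-β * t) * exp (β * t) = 1 := by rw [← exp_add]; simp
  have hy2 := sq_le_sq_of_abs_le hy
  have hsrc : (M * exp (-ν * t)) ^ 2 * exp (β * t) = M ^ 2 * exp (-ν' * t) := by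
    rw [mul_pow, ← exp_nat_mul, mul_assoc, ← exp_add, hν']; ring_nf
  have hsq : exp (β * t) * (exp (-β * t) * x - y) ^ 2
      = exp (-β * t) * x ^ 2 - 2 * x * y + exp (β * t) * y ^ 2 := by
    linear_combination (exp (-β * t) * x ^ 2 - 2 * x * y) * hinv
  nlinarith [mul_nonneg (exp_pos (β * t)).le (sq_nonneg (exp (-β * t) * x - y)),
    mul_le_mul_of_nonneg_right hy2 (exp_pos (β * t)).le]

theorem abs_le_mul_exp_of_sq_le {x K C ε y z : ℝ} (hx : x ^ 2 ≤ K * ε ^ 2 * exp z)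
    (hz : z = 2 * y) (hKC : K ≤ C) (hC : 1 ≤ C) (hε : 0 ≤ ε) : |x| ≤ C * ε * exp y := by
  refine abs_le_of_sq_le_sq ?_ (by positivity)
  calc x ^ 2 ≤ K * ε ^ 2 * exp z := hx
    _ ≤ C ^ 2 * ε ^ 2 * exp z := by gcongr; nlinarith
    _ = (C * ε * exp y) ^ 2 := by rw [hz, two_mul, exp_add]; ring

structure BianchiIData where
  B : ℝ → ℝ
  S22 : ℝ → ℝ
  S33 : ℝ → ℝ
  S12 : ℝ → ℝ
  S13 : ℝ → ℝ
  S23 : ℝ → ℝ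
  Phat : ℝ → ℝ
  Phat' : ℝ → ℝ
  s : ℝ → ℝ
  P22 : ℝ → ℝ
  P33 : ℝ → ℝ
  P23 : ℝ → ℝ
  P12 : ℝ → ℝ
  P13 : ℝ → ℝ

namespace BianchiIData

variable (d : BianchiIData)

noncomputable def F : ℝ → ℝ := shearScalar d.S22 d.S33 d.S12 d.S13 d.S23

noncomputable def q : ℝ → ℝ := decelParam d.B d.S22 d.S33 d.S12 d.S13 d.S23 d.s

noncomputable def lyapunov (τ : ℝ) : ℝ := d.F τ + d.B τ ^ 2 + d.Phat τ

/-- `Σ_{ab} Π^{ab}`, with the trace-free completions `Σ₁₁ = -Σ₂₂ - Σ₃₃` and `Π₁₁ = -Π₂₂ - Π₃₃`. -/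
def stressPairing (τ : ℝ) : ℝ :=
  (2 * d.S22 τ + d.S33 τ) * d.P22 τ + (d.S22 τ + 2 * d.S33 τ) * d.P33 τ
    + 2 * (d.S12 τ * d.P12 τ + d.S13 τ * d.P13 τ + d.S23 τ * d.P23 τ)

def offDiagSq (τ : ℝ) : ℝ := d.S12 τ ^ 2 + d.S13 τ ^ 2 + d.S23 τ ^ 2

def diffForcing (τ : ℝ) : ℝ := 2 * d.S13 τ ^ 2 - 2 * d.S12 τ ^ 2 + d.P22 τ - d.P33 τ

noncomputable def sumForcing (τ : ℝ) : ℝ :=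
  -2 * d.S12 τ ^ 2 - 2 * d.S13 τ ^ 2 + 2 * d.B τ ^ 2 / 3 + d.P22 τ + d.P33 τ

structure IsSolution (τ₀ : ℝ) : Prop where
  hasDerivAt_B : ∀ τ ∈ Ici τ₀, HasDerivAt d.B ((d.q τ - 1 - d.S22 τ - d.S33 τ) * d.B τ) τ
  hasDerivAt_S22 : ∀ τ ∈ Ici τ₀, HasDerivAt d.S22
    ((d.q τ - 2) * d.S22 τ - 2 * d.S12 τ ^ 2 + d.B τ ^ 2 / 3 + d.P22 τ) τ
  hasDerivAt_S33 : ∀ τ ∈ Ici τ₀, HasDerivAt d.S33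
    ((d.q τ - 2) * d.S33 τ - 2 * d.S13 τ ^ 2 + d.B τ ^ 2 / 3 + d.P33 τ) τ
  hasDerivAt_S23 : ∀ τ ∈ Ici τ₀, HasDerivAt d.S23
    ((d.q τ - 2) * d.S23 τ - 2 * d.S12 τ * d.S13 τ + d.P23 τ) τ
  hasDerivAt_S12 : ∀ τ ∈ Ici τ₀, HasDerivAt d.S12
    ((d.q τ - 2) * d.S12 τ + 2 * d.S12 τ * d.S22 τ + d.S12 τ * d.S33 τ + d.S13 τ * d.S23 τ
      + d.P12 τ) τ
  hasDerivAt_S13 : ∀ τ ∈ Ici τ₀, HasDerivAt d.S13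
    ((d.q τ - 2) * d.S13 τ + 2 * d.S13 τ * d.S33 τ + d.S13 τ * d.S22 τ + d.S12 τ * d.S23 τ
      + d.P13 τ) τ
  hasDerivAt_Phat : ∀ τ ∈ Ici τ₀, HasDerivAt d.Phat (d.Phat' τ) τ
  Phat'_le : ∀ τ ∈ Ici τ₀, d.Phat' τ ≤ (-2 + 2 * √(d.F τ)) * d.Phat τ
  Phat_nonneg : ∀ τ ∈ Ici τ₀, 0 ≤ d.Phat τ
  s_le : ∀ τ ∈ Ici τ₀, d.s τ ≤ 3 * d.Phat τ
  abs_P22_le : ∀ τ ∈ Ici τ₀, |d.P22 τ| ≤ d.s τ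
  abs_P33_le : ∀ τ ∈ Ici τ₀, |d.P33 τ| ≤ d.s τ
  abs_P23_le : ∀ τ ∈ Ici τ₀, |d.P23 τ| ≤ d.s τ
  abs_P12_le : ∀ τ ∈ Ici τ₀, |d.P12 τ| ≤ d.s τ
  abs_P13_le : ∀ τ ∈ Ici τ₀, |d.P13 τ| ≤ d.s τ

structure IsSmallData (τ₀ ε : ℝ) : Prop where
  /-- This makes `lyapunov τ₀ ≤ 1 / 10000`, the threshold of `IsSolution.lyapunov_deriv_le`. -/
  eps_le : ε ≤ 1 / 20000
  abs_B_le : |d.B τ₀| ≤ ε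
  abs_S22_le : |d.S22 τ₀| ≤ ε
  abs_S33_le : |d.S33 τ₀| ≤ ε
  abs_S12_le : |d.S12 τ₀| ≤ ε
  abs_S13_le : |d.S13 τ₀| ≤ ε
  abs_S23_le : |d.S23 τ₀| ≤ ε
  Phat_le : d.Phat τ₀ ≤ ε

theorem IsSmallData.eps_nonneg {τ₀ ε : ℝ} (h0 : d.IsSmallData τ₀ ε) : 0 ≤ ε :=
  (abs_nonneg _).trans h0.abs_B_le

theorem IsSmallData.eps_le_one {τ₀ ε : ℝ} (h0 : d.IsSmallData τ₀ ε) : ε ≤ 1 :=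
  h0.eps_le.trans (by norm_num)

theorem F_nonneg (τ : ℝ) : 0 ≤ d.F τ := by
  unfold F shearScalar; positivity

theorem abs_le_sqrt_F (τ : ℝ) :
    |d.S22 τ| ≤ √(d.F τ) ∧ |d.S33 τ| ≤ √(d.F τ) ∧ |d.S22 τ + d.S33 τ| ≤ √(d.F τ) ∧
      |d.S12 τ| ≤ √(d.F τ) ∧ |d.S13 τ| ≤ √(d.F τ) ∧ |d.S23 τ| ≤ √(d.F τ) := by
  unfold F shearScalar
  refine ⟨?_, ?_, ?_, ?_, ?_, ?_⟩ <;> apply Real.abs_le_sqrt <;>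
    nlinarith [sq_nonneg (d.S22 τ), sq_nonneg (d.S33 τ), sq_nonneg (d.S12 τ), sq_nonneg (d.S13 τ),
      sq_nonneg (d.S23 τ)]

theorem sq_le_offDiagSq (τ : ℝ) :
    d.S12 τ ^ 2 ≤ d.offDiagSq τ ∧ d.S13 τ ^ 2 ≤ d.offDiagSq τ ∧ d.S23 τ ^ 2 ≤ d.offDiagSq τ := by
  unfold offDiagSq
  refine ⟨?_, ?_, ?_⟩ <;> nlinarith [sq_nonneg (d.S12 τ), sq_nonneg (d.S13 τ), sq_nonneg (d.S23 τ)]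

theorem q_sub_half_le {τ : ℝ} (hs : d.s τ ≤ 3 * d.Phat τ) :
    d.q τ - 1 / 2 ≤ d.lyapunov τ / 2 := by
  have := d.F_nonneg τ
  unfold q decelParam lyapunov F at *
  nlinarith [sq_nonneg (d.B τ)]

variable {d} {τ₀ τ : ℝ}

theorem IsSolution.lyapunov_nonneg (h : d.IsSolution τ₀) (hτ : τ ∈ Ici τ₀) : 0 ≤ d.lyapunov τ :=
  add_nonneg (add_nonneg (d.F_nonneg τ) (sq_nonneg _)) (h.Phat_nonneg τ hτ)

theorem IsSolution.abs_stressPairing_le (h : d.IsSolution τ₀) (hτ : τ ∈ Ici τ₀) :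
    |d.stressPairing τ| ≤ 12 * d.s τ * √(d.F τ) := by
  obtain ⟨ha, hb, -, hd, he, hc⟩ := d.abs_le_sqrt_F τ
  have hprod {x p : ℝ} (hx : |x| ≤ √(d.F τ)) (hp : |p| ≤ d.s τ) : |x * p| ≤ √(d.F τ) * d.s τ := by
    rw [abs_mul]; exact mul_le_mul hx hp (abs_nonneg _) (Real.sqrt_nonneg _)
  have h1 := abs_le.1 (hprod ha (h.abs_P22_le τ hτ))
  have h2 := abs_le.1 (hprod hb (h.abs_P22_le τ hτ))
  have h3 := abs_le.1 (hprod ha (h.abs_P33_le τ hτ))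
  have h4 := abs_le.1 (hprod hb (h.abs_P33_le τ hτ))
  have h5 := abs_le.1 (hprod hd (h.abs_P12_le τ hτ))
  have h6 := abs_le.1 (hprod he (h.abs_P13_le τ hτ))
  have h7 := abs_le.1 (hprod hc (h.abs_P23_le τ hτ))
  have hexp : d.stressPairing τ = 2 * (d.S22 τ * d.P22 τ) + d.S33 τ * d.P22 τ + d.S22 τ * d.P33 τ
      + 2 * (d.S33 τ * d.P33 τ) + 2 * (d.S12 τ * d.P12 τ) + 2 * (d.S13 τ * d.P13 τ)
      + 2 * (d.S23 τ * d.P23 τ) := by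
    unfold stressPairing; ring
  rw [hexp, abs_le]
  constructor <;> linarith

theorem IsSolution.hasDerivAt_lyapunov (h : d.IsSolution τ₀) (hτ : τ ∈ Ici τ₀) :
    HasDerivAt d.lyapunov (2 * (d.q τ - 2) * d.F τ + 2 * (d.q τ - 1) * d.B τ ^ 2
      + 2 * d.stressPairing τ + d.Phat' τ) τ := by
  have h22 := h.hasDerivAt_S22 τ hτ
  have h33 := h.hasDerivAt_S33 τ hτ
  have hF := ((((h22.neg.sub h33).pow 2).add (h22.pow 2)).add (h33.pow 2)).add
    (((((h.hasDerivAt_S12 τ hτ).pow 2).add ((h.hasDerivAt_S13 τ hτ).pow 2)).add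
      ((h.hasDerivAt_S23 τ hτ).pow 2)).const_mul 2)
  refine ((hF.add ((h.hasDerivAt_B τ hτ).pow 2)).add (h.hasDerivAt_Phat τ hτ)).congr_deriv ?_
  unfold F shearScalar stressPairing
  simp only [Pi.sub_apply, Pi.neg_apply]
  push_cast
  ring

theorem IsSolution.lyapunov_deriv_le (h : d.IsSolution τ₀) (hτ : τ ∈ Ici τ₀)
    (hV : d.lyapunov τ ≤ 1 / 10000) :
    2 * (d.q τ - 2) * d.F τ + 2 * (d.q τ - 1) * d.B τ ^ 2 + 2 * d.stressPairing τ + d.Phat' τ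
      ≤ -(d.lyapunov τ / 2) := by
  have hF := d.F_nonneg τ
  have hP := h.Phat_nonneg τ hτ
  have hs := h.s_le τ hτ
  have hB := sq_nonneg (d.B τ)
  have hq := d.q_sub_half_le hs
  have hr : √(d.F τ) ≤ 1 / 100 := by
    rw [Real.sqrt_le_left (by norm_num)]; unfold lyapunov at hV; linarith
  have hr0 := Real.sqrt_nonneg (d.F τ)
  have hpair := (abs_le.1 (h.abs_stressPairing_le hτ)).2
  have hP' := h.Phat'_le τ hτ
  have hV0 : d.lyapunov τ = d.F τ + d.B τ ^ 2 + d.Phat τ := rfl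
  nlinarith [mul_le_mul_of_nonneg_right hq hF, mul_le_mul_of_nonneg_right hq hB,
    mul_le_mul_of_nonneg_left hr hP, mul_le_mul hs hr hr0 (by positivity)]

theorem IsSolution.lyapunov_le (h : d.IsSolution τ₀) (hV₀ : d.lyapunov τ₀ ≤ 1 / 10000)
    (hτ : τ ∈ Ici τ₀) : d.lyapunov τ ≤ d.lyapunov τ₀ * exp (-(1 / 2) * (τ - τ₀)) := by
  have hsmall : ∀ t ∈ Ici τ₀, d.lyapunov t ≤ 1 / 10000 :=
    le_on_Ici_of_hasDerivAt_neg_of_eq (fun t ht => h.hasDerivAt_lyapunov ht) hV₀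
      fun t ht hVt => by linarith [h.lyapunov_deriv_le ht hVt.le]
  simpa using le_exp_mul_of_hasDerivAt_le_homogeneous (c := 0) (β := 1)
    (fun t ht => h.hasDerivAt_lyapunov ht)
    (fun t ht => (h.lyapunov_deriv_le ht (hsmall t ht)).trans_eq (by ring))
    le_rfl one_pos (h.lyapunov_nonneg self_mem_Ici) hτ

theorem IsSolution.lyapunov_le_of_isSmallData {ε : ℝ} (h : d.IsSolution τ₀)
    (h0 : d.IsSmallData τ₀ ε) (hτ : τ ∈ Ici τ₀) :
    d.lyapunov τ ≤ exp (-(1 / 4) * (τ - τ₀)) ^ 2 := by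
  have hε := h0.eps_nonneg
  have hV₀ : d.lyapunov τ₀ ≤ 1 / 10000 := by
    have := sq_nonneg (d.S22 τ₀ - d.S33 τ₀)
    unfold lyapunov F shearScalar
    nlinarith [sq_le_sq_of_abs_le h0.abs_B_le, sq_le_sq_of_abs_le h0.abs_S22_le,
      sq_le_sq_of_abs_le h0.abs_S33_le, sq_le_sq_of_abs_le h0.abs_S12_le,
      sq_le_sq_of_abs_le h0.abs_S13_le, sq_le_sq_of_abs_le h0.abs_S23_le, h0.Phat_le, h0.eps_le]
  calc d.lyapunov τ ≤ d.lyapunov τ₀ * exp (-(1 / 2) * (τ - τ₀)) := h.lyapunov_le hV₀ hτ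
    _ ≤ 1 * exp (-(1 / 2) * (τ - τ₀)) := by gcongr; linarith
    _ = exp (-(1 / 4) * (τ - τ₀)) ^ 2 := by rw [one_mul, ← exp_nat_mul]; ring_nf

theorem IsSolution.hasDerivAt_B_sq (h : d.IsSolution τ₀) (hτ : τ ∈ Ici τ₀) :
    HasDerivAt (fun t => d.B t ^ 2) (2 * (d.q τ - 1 - (d.S22 τ + d.S33 τ)) * d.B τ ^ 2) τ :=
  ((h.hasDerivAt_B τ hτ).pow 2).congr_deriv (by push_cast; ring)

theorem IsSolution.hasDerivAt_offDiagSq (h : d.IsSolution τ₀) (hτ : τ ∈ Ici τ₀) :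
    HasDerivAt d.offDiagSq (2 * (d.q τ - 2) * d.offDiagSq τ
      + (4 * d.S22 τ + 2 * d.S33 τ) * d.S12 τ ^ 2 + (2 * d.S22 τ + 4 * d.S33 τ) * d.S13 τ ^ 2
      + 2 * (d.S12 τ * d.P12 τ + d.S13 τ * d.P13 τ + d.S23 τ * d.P23 τ)) τ := by
  refine ((((h.hasDerivAt_S12 τ hτ).pow 2).add ((h.hasDerivAt_S13 τ hτ).pow 2)).add
    ((h.hasDerivAt_S23 τ hτ).pow 2)).congr_deriv ?_
  unfold offDiagSq
  push_cast
  ring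

theorem IsSolution.hasDerivAt_diff_sq (h : d.IsSolution τ₀) (hτ : τ ∈ Ici τ₀) :
    HasDerivAt (fun t => (d.S22 t - d.S33 t) ^ 2) (2 * (d.S22 τ - d.S33 τ)
      * ((d.q τ - 2) * (d.S22 τ - d.S33 τ) + d.diffForcing τ)) τ := by
  refine (((h.hasDerivAt_S22 τ hτ).sub (h.hasDerivAt_S33 τ hτ)).pow 2).congr_deriv ?_
  unfold diffForcing
  simp only [Pi.sub_apply]
  push_cast
  ring

theorem IsSolution.hasDerivAt_sum_sq (h : d.IsSolution τ₀) (hτ : τ ∈ Ici τ₀) :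
    HasDerivAt (fun t => (d.S22 t + d.S33 t) ^ 2) (2 * (d.S22 τ + d.S33 τ)
      * ((d.q τ - 2) * (d.S22 τ + d.S33 τ) + d.sumForcing τ)) τ := by
  refine (((h.hasDerivAt_S22 τ hτ).add (h.hasDerivAt_S33 τ hτ)).pow 2).congr_deriv ?_
  unfold sumForcing
  simp only [Pi.add_apply]
  push_cast
  ring

section SmallData

variable {ε : ℝ}

theorem IsSolution.sqrt_F_le (h : d.IsSolution τ₀) (h0 : d.IsSmallData τ₀ ε) (hτ : τ ∈ Ici τ₀) :
    √(d.F τ) ≤ exp (-(1 / 4) * (τ - τ₀)) := by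
  rw [Real.sqrt_le_left (exp_pos _).le]
  have hV := h.lyapunov_le_of_isSmallData h0 hτ
  have hP := h.Phat_nonneg τ hτ
  unfold lyapunov at hV
  nlinarith [sq_nonneg (d.B τ)]

theorem IsSolution.q_sub_two_le (h : d.IsSolution τ₀) (h0 : d.IsSmallData τ₀ ε)
    (hτ : τ ∈ Ici τ₀) : d.q τ - 2 ≤ -3 / 2 + exp (-(1 / 4) * (τ - τ₀)) / 2 := by
  have hE : exp (-(1 / 4) * (τ - τ₀)) ≤ 1 :=
    exp_le_one_iff.2 (by linarith [sub_nonneg.2 (mem_Ici.1 hτ)])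
  have hE0 := exp_pos (-(1 / 4) * (τ - τ₀))
  have hq := d.q_sub_half_le (h.s_le τ hτ)
  have hV := h.lyapunov_le_of_isSmallData h0 hτ
  nlinarith

theorem IsSolution.Phat_le (h : d.IsSolution τ₀) (h0 : d.IsSmallData τ₀ ε) (hτ : τ ∈ Ici τ₀) :
    d.Phat τ ≤ exp 8 * d.Phat τ₀ * exp (-2 * (τ - τ₀)) := by
  have := le_exp_mul_of_hasDerivAt_le_homogeneous (k := 2) (c := 2) (β := 1 / 4) h.hasDerivAt_Phat
    (fun t ht => (h.Phat'_le t ht).trans (mul_le_mul_of_nonneg_right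
      (by linarith [h.sqrt_F_le h0 ht]) (h.Phat_nonneg t ht)))
    zero_le_two (by norm_num) (h.Phat_nonneg τ₀ self_mem_Ici) hτ
  rwa [show (2 : ℝ) / (1 / 4) = 8 by norm_num] at this

theorem IsSolution.B_sq_le (h : d.IsSolution τ₀) (h0 : d.IsSmallData τ₀ ε) (hτ : τ ∈ Ici τ₀) :
    d.B τ ^ 2 ≤ exp 12 * d.B τ₀ ^ 2 * exp (-(τ - τ₀)) := by
  have hf' (t : ℝ) (ht : t ∈ Ici τ₀) : 2 * (d.q t - 1 - (d.S22 t + d.S33 t)) * d.B t ^ 2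
      ≤ (-1 + 3 * exp (-(1 / 4) * (t - τ₀))) * d.B t ^ 2 := by
    have hq := h.q_sub_two_le h0 ht
    have hab := (neg_le_abs _).trans ((d.abs_le_sqrt_F t).2.2.1.trans (h.sqrt_F_le h0 ht))
    exact mul_le_mul_of_nonneg_right (by linarith) (sq_nonneg _)
  have := le_exp_mul_of_hasDerivAt_le_homogeneous (k := 1) (c := 3) (β := 1 / 4)
    (fun t ht => h.hasDerivAt_B_sq ht) hf' (by norm_num) (by norm_num) (sq_nonneg _) hτ
  rwa [show (3 : ℝ) / (1 / 4) = 12 by norm_num, neg_one_mul] at this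

theorem IsSolution.offDiagSq_le (h : d.IsSolution τ₀) (h0 : d.IsSmallData τ₀ ε) {K : ℝ}
    (hs : ∀ t ∈ Ici τ₀, d.s t ≤ K * exp (-2 * (t - τ₀))) (hτ : τ ∈ Ici τ₀) :
    d.offDiagSq τ ≤ exp 32 * (d.offDiagSq τ₀ + 4 * K ^ 2) * exp (-3 * (τ - τ₀)) := by
  have hf' (t : ℝ) (ht : t ∈ Ici τ₀) : 2 * (d.q t - 2) * d.offDiagSq t
      + (4 * d.S22 t + 2 * d.S33 t) * d.S12 t ^ 2 + (2 * d.S22 t + 4 * d.S33 t) * d.S13 t ^ 2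
      + 2 * (d.S12 t * d.P12 t + d.S13 t * d.P13 t + d.S23 t * d.P23 t)
      ≤ (-3 + 8 * exp (-(1 / 4) * (t - τ₀))) * d.offDiagSq t
        + 3 * K ^ 2 * exp (-(15 / 4) * (t - τ₀)) := by
    set E := exp (-(1 / 4) * (t - τ₀))
    -- Young's inequality with the integrable weight `E`: the price `s² / E` still decays at
    -- rate `15/4 > 3`.
    have hF := h.sqrt_F_le h0 ht
    obtain ⟨ha, hb, -, -, -, -⟩ := d.abs_le_sqrt_F t
    have hq := mul_le_mul_of_nonneg_right (h.q_sub_two_le h0 ht)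
      (by unfold offDiagSq; positivity : 0 ≤ d.offDiagSq t)
    have hcross1 := mul_le_mul_of_nonneg_right
      (show 4 * d.S22 t + 2 * d.S33 t ≤ 6 * E by
        linarith [le_abs_self (d.S22 t), le_abs_self (d.S33 t)])
      (sq_nonneg (d.S12 t))
    have hcross2 := mul_le_mul_of_nonneg_right
      (show 2 * d.S22 t + 4 * d.S33 t ≤ 6 * E by
        linarith [le_abs_self (d.S22 t), le_abs_self (d.S33 t)])
      (sq_nonneg (d.S13 t))
    have hamgm {x p : ℝ} (hp : |p| ≤ d.s t) := two_mul_le_of_abs_le_mul_exp (x := x) (β := 1 / 4)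
      (ν' := 15 / 4) (hp.trans (hs t ht)) (by norm_num)
    have h12 := hamgm (x := d.S12 t) (h.abs_P12_le t ht)
    have h13 := hamgm (x := d.S13 t) (h.abs_P13_le t ht)
    have h23 := hamgm (x := d.S23 t) (h.abs_P23_le t ht)
    have hE := exp_pos (-(1 / 4) * (t - τ₀))
    unfold offDiagSq at *
    linarith [mul_nonneg hE.le (sq_nonneg (d.S23 t))]
  have := le_exp_mul_of_hasDerivAt_le_of_lt (fun t ht => h.hasDerivAt_offDiagSq ht) hf'
    (by norm_num) (by norm_num) (by positivity) (by norm_num : (3 : ℝ) < 15 / 4)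
    (by unfold offDiagSq; positivity) hτ
  rwa [show (8 : ℝ) / (1 / 4) = 32 by norm_num,
    show 3 * K ^ 2 / (15 / 4 - 3) = 4 * K ^ 2 by ring] at this

theorem IsSolution.diff_sq_le (h : d.IsSolution τ₀) (h0 : d.IsSmallData τ₀ ε) {M : ℝ}
    (hz : ∀ t ∈ Ici τ₀, |d.diffForcing t| ≤ M * exp (-2 * (t - τ₀))) (hτ : τ ∈ Ici τ₀) :
    (d.S22 τ - d.S33 τ) ^ 2
      ≤ exp 8 * ((d.S22 τ₀ - d.S33 τ₀) ^ 2 + 4 / 3 * M ^ 2) * exp (-3 * (τ - τ₀)) := by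
  have hf' (t : ℝ) (ht : t ∈ Ici τ₀) : 2 * (d.S22 t - d.S33 t)
      * ((d.q t - 2) * (d.S22 t - d.S33 t) + d.diffForcing t)
      ≤ (-3 + 2 * exp (-(1 / 4) * (t - τ₀))) * (d.S22 t - d.S33 t) ^ 2
        + M ^ 2 * exp (-(15 / 4) * (t - τ₀)) := by
    have hq := mul_le_mul_of_nonneg_right (h.q_sub_two_le h0 ht) (sq_nonneg (d.S22 t - d.S33 t))
    have hamgm := two_mul_le_of_abs_le_mul_exp (x := d.S22 t - d.S33 t) (β := 1 / 4)
      (ν' := 15 / 4) (hz t ht) (by norm_num)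
    linarith
  have := le_exp_mul_of_hasDerivAt_le_of_lt (fun t ht => h.hasDerivAt_diff_sq ht) hf'
    (by norm_num) (by norm_num) (sq_nonneg M) (by norm_num : (3 : ℝ) < 15 / 4) (sq_nonneg _) hτ
  rwa [show (2 : ℝ) / (1 / 4) = 8 by norm_num,
    show M ^ 2 / (15 / 4 - 3) = 4 / 3 * M ^ 2 by ring] at this

theorem IsSolution.sum_sq_le (h : d.IsSolution τ₀) (h0 : d.IsSmallData τ₀ ε) {M : ℝ}
    (hz : ∀ t ∈ Ici τ₀, |d.sumForcing t| ≤ M * exp (-(t - τ₀))) (hτ : τ ∈ Ici τ₀) :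
    (d.S22 τ + d.S33 τ) ^ 2
      ≤ exp 4 * ((d.S22 τ₀ + d.S33 τ₀) ^ 2 + 4 * M ^ 2) * exp (-2 * (τ - τ₀)) := by
  have hf' (t : ℝ) (ht : t ∈ Ici τ₀) : 2 * (d.S22 t + d.S33 t)
      * ((d.q t - 2) * (d.S22 t + d.S33 t) + d.sumForcing t)
      ≤ (-(5 / 2) + 1 * exp (-(1 / 4) * (t - τ₀))) * (d.S22 t + d.S33 t) ^ 2
        + 2 * M ^ 2 * exp (-2 * (t - τ₀)) := by
    have hq := mul_le_mul_of_nonneg_right (h.q_sub_two_le h0 ht) (sq_nonneg (d.S22 t + d.S33 t))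
    have hz2 : d.sumForcing t ^ 2 ≤ M ^ 2 * exp (-2 * (t - τ₀)) := by
      calc d.sumForcing t ^ 2 ≤ (M * exp (-(t - τ₀))) ^ 2 := sq_le_sq_of_abs_le (hz t ht)
        _ = M ^ 2 * exp (-2 * (t - τ₀)) := by rw [mul_pow, ← exp_nat_mul]; ring_nf
    linarith [sq_nonneg (d.S22 t + d.S33 t - 2 * d.sumForcing t)]
  have := le_exp_mul_of_hasDerivAt_le_of_gt (fun t ht => h.hasDerivAt_sum_sq ht) hf'
    (by norm_num) (by norm_num) (by positivity) (by norm_num : (2 : ℝ) < 5 / 2) (sq_nonneg _) hτ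
  rwa [show (1 : ℝ) / (1 / 4) = 4 by norm_num,
    show 2 * M ^ 2 / (5 / 2 - 2) = 4 * M ^ 2 by ring] at this

end SmallData

end BianchiIData

def UniformlyDecays (f : BianchiIData → ℝ → ℝ) (p : ℕ) (μ : ℝ) : Prop :=
  ∃ K, 0 ≤ K ∧ ∀ (d : BianchiIData) (τ₀ ε : ℝ), d.IsSolution τ₀ → d.IsSmallData τ₀ ε →
    ∀ τ ∈ Ici τ₀, f d τ ≤ K * ε ^ p * exp (-μ * (τ - τ₀))

namespace UniformlyDecays

variable {f g : BianchiIData → ℝ → ℝ} {p : ℕ} {μ : ℝ}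

theorem of_le (hf : UniformlyDecays f p μ)
    (hgf : ∀ (d : BianchiIData) (τ₀ : ℝ), d.IsSolution τ₀ → ∀ τ ∈ Ici τ₀, g d τ ≤ f d τ) :
    UniformlyDecays g p μ :=
  let ⟨K, hK, hf⟩ := hf
  ⟨K, hK, fun d τ₀ ε h h0 τ hτ => (hgf d τ₀ h τ hτ).trans (hf d τ₀ ε h h0 τ hτ)⟩

theorem add (hf : UniformlyDecays f p μ) (hg : UniformlyDecays g p μ) :
    UniformlyDecays (fun d τ => f d τ + g d τ) p μ :=
  let ⟨K, hK, hf⟩ := hf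
  let ⟨L, hL, hg⟩ := hg
  ⟨K + L, add_nonneg hK hL, fun d τ₀ ε h h0 τ hτ => by
    linarith [hf d τ₀ ε h h0 τ hτ, hg d τ₀ ε h h0 τ hτ]⟩

theorem const_mul (hf : UniformlyDecays f p μ) {c : ℝ} (hc : 0 ≤ c) :
    UniformlyDecays (fun d τ => c * f d τ) p μ :=
  let ⟨K, hK, hf⟩ := hf
  ⟨c * K, mul_nonneg hc hK, fun d τ₀ ε h h0 τ hτ => by
    rw [mul_assoc c, mul_assoc c]
    exact mul_le_mul_of_nonneg_left (by simpa only [mul_assoc] using hf d τ₀ ε h h0 τ hτ) hc⟩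

theorem mono (hf : UniformlyDecays f p μ) {p' : ℕ} {μ' : ℝ} (hp : p' ≤ p) (hμ : μ' ≤ μ) :
    UniformlyDecays f p' μ' :=
  let ⟨K, hK, hf⟩ := hf
  ⟨K, hK, fun d τ₀ ε h h0 τ hτ => (hf d τ₀ ε h h0 τ hτ).trans <|
    mul_le_mul (mul_le_mul_of_nonneg_left (pow_le_pow_of_le_one h0.eps_nonneg h0.eps_le_one hp) hK)
      (exp_le_exp.2 (by nlinarith [sub_nonneg.2 (mem_Ici.1 hτ)])) (exp_pos _).le
      (mul_nonneg hK (pow_nonneg h0.eps_nonneg _))⟩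

end UniformlyDecays

open BianchiIData

theorem uniformlyDecays_Phat : UniformlyDecays Phat 1 2 :=
  ⟨exp 8, (exp_pos _).le, fun d τ₀ ε h h0 τ hτ => (h.Phat_le h0 hτ).trans <| by
    rw [pow_one]; gcongr; exact h0.Phat_le⟩

theorem uniformlyDecays_s : UniformlyDecays s 1 2 :=
  (uniformlyDecays_Phat.const_mul (c := 3) (by norm_num)).of_le fun _ _ h τ hτ => h.s_le τ hτ

theorem uniformlyDecays_B_sq : UniformlyDecays (fun d τ => d.B τ ^ 2) 2 1 :=
  ⟨exp 12, (exp_pos _).le, fun d τ₀ ε h h0 τ hτ => (h.B_sq_le h0 hτ).trans <| by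
    rw [neg_one_mul]; gcongr exp 12 * ?_ * _; exact sq_le_sq_of_abs_le h0.abs_B_le⟩

theorem uniformlyDecays_offDiagSq : UniformlyDecays offDiagSq 2 3 := by
  obtain ⟨K, hK, hs⟩ := uniformlyDecays_s
  refine ⟨exp 32 * (3 + 4 * K ^ 2), by positivity, fun d τ₀ ε h h0 τ hτ => ?_⟩
  refine (h.offDiagSq_le h0 (K := K * ε) (fun t ht => by simpa using hs d τ₀ ε h h0 t ht)
    hτ).trans ?_
  have hD₀ : d.offDiagSq τ₀ ≤ 3 * ε ^ 2 := by
    unfold offDiagSq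
    linarith [sq_le_sq_of_abs_le h0.abs_S12_le, sq_le_sq_of_abs_le h0.abs_S13_le,
      sq_le_sq_of_abs_le h0.abs_S23_le]
  calc exp 32 * (d.offDiagSq τ₀ + 4 * (K * ε) ^ 2) * exp (-3 * (τ - τ₀))
      ≤ exp 32 * ((3 + 4 * K ^ 2) * ε ^ 2) * exp (-3 * (τ - τ₀)) := by
        gcongr exp 32 * ?_ * _; linarith [mul_pow K ε 2]
    _ = _ := by ring

theorem uniformlyDecays_abs_diffForcing :
    UniformlyDecays (fun d τ => |d.diffForcing τ|) 1 2 :=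
  (((uniformlyDecays_offDiagSq.mono (by norm_num) (by norm_num)).const_mul zero_le_two).add
    (uniformlyDecays_s.const_mul zero_le_two)).of_le fun d τ₀ h τ hτ => by
      have h22 := abs_le.1 (h.abs_P22_le τ hτ)
      have h33 := abs_le.1 (h.abs_P33_le τ hτ)
      unfold diffForcing offDiagSq
      rw [abs_le]
      constructor <;> nlinarith [sq_nonneg (d.S12 τ), sq_nonneg (d.S13 τ), sq_nonneg (d.S23 τ)]

theorem uniformlyDecays_diff_sq :
    UniformlyDecays (fun d τ => (d.S22 τ - d.S33 τ) ^ 2) 2 3 := by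
  obtain ⟨K, hK, hz⟩ := uniformlyDecays_abs_diffForcing
  refine ⟨exp 8 * (4 + 4 / 3 * K ^ 2), by positivity, fun d τ₀ ε h h0 τ hτ => ?_⟩
  refine (h.diff_sq_le h0 (M := K * ε) (fun t ht => by simpa using hz d τ₀ ε h h0 t ht) hτ).trans ?_
  have hX₀ : (d.S22 τ₀ - d.S33 τ₀) ^ 2 ≤ 4 * ε ^ 2 := by
    nlinarith [sq_le_sq_of_abs_le h0.abs_S22_le, sq_le_sq_of_abs_le h0.abs_S33_le,
      sq_nonneg (d.S22 τ₀ + d.S33 τ₀)]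
  calc exp 8 * ((d.S22 τ₀ - d.S33 τ₀) ^ 2 + 4 / 3 * (K * ε) ^ 2) * exp (-3 * (τ - τ₀))
      ≤ exp 8 * ((4 + 4 / 3 * K ^ 2) * ε ^ 2) * exp (-3 * (τ - τ₀)) := by
        gcongr exp 8 * ?_ * _; linarith [mul_pow K ε 2]
    _ = _ := by ring

theorem uniformlyDecays_abs_sumForcing :
    UniformlyDecays (fun d τ => |d.sumForcing τ|) 1 1 :=
  ((((uniformlyDecays_offDiagSq.mono (by norm_num) (by norm_num)).const_mul zero_le_two).add
    ((uniformlyDecays_B_sq.mono (by norm_num) le_rfl).const_mul (c := 2 / 3) (by norm_num))).add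
    ((uniformlyDecays_s.mono le_rfl (by norm_num)).const_mul zero_le_two)).of_le
    fun d τ₀ h τ hτ => by
      have h22 := abs_le.1 (h.abs_P22_le τ hτ)
      have h33 := abs_le.1 (h.abs_P33_le τ hτ)
      unfold sumForcing offDiagSq
      rw [abs_le]
      constructor <;> nlinarith [sq_nonneg (d.S12 τ), sq_nonneg (d.S13 τ), sq_nonneg (d.S23 τ),
        sq_nonneg (d.B τ)]

theorem uniformlyDecays_sum_sq :
    UniformlyDecays (fun d τ => (d.S22 τ + d.S33 τ) ^ 2) 2 2 := by
  obtain ⟨K, hK, hz⟩ := uniformlyDecays_abs_sumForcing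
  refine ⟨exp 4 * (4 + 4 * K ^ 2), by positivity, fun d τ₀ ε h h0 τ hτ => ?_⟩
  refine (h.sum_sq_le h0 (M := K * ε) (fun t ht => by simpa using hz d τ₀ ε h h0 t ht) hτ).trans ?_
  have hY₀ : (d.S22 τ₀ + d.S33 τ₀) ^ 2 ≤ 4 * ε ^ 2 := by
    nlinarith [sq_le_sq_of_abs_le h0.abs_S22_le, sq_le_sq_of_abs_le h0.abs_S33_le,
      sq_nonneg (d.S22 τ₀ - d.S33 τ₀)]
  calc exp 4 * ((d.S22 τ₀ + d.S33 τ₀) ^ 2 + 4 * (K * ε) ^ 2) * exp (-2 * (τ - τ₀))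
      ≤ exp 4 * ((4 + 4 * K ^ 2) * ε ^ 2) * exp (-2 * (τ - τ₀)) := by
        gcongr exp 4 * ?_ * _; linarith [mul_pow K ε 2]
    _ = _ := by ring

/-- Small-data decay rates for the Hubble-normalised Bianchi I
Einstein–Vlasov system with a pure magnetic field (Lemma 1). -/
theorem bianchiI_magnetic_vlasov_decay :
    ∃ ε₀ > (0 : ℝ), ∃ C > (0 : ℝ),
      ∀ (τ₀ : ℝ) (B S22 S33 S12 S13 S23 Phat Phat' s P22 P33 P23 P12 P13 : ℝ → ℝ),
      -- continuity of the normalised kinetic stresses and of the derivative of P̂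
      ContinuousOn s (Ici τ₀) → ContinuousOn P22 (Ici τ₀) → ContinuousOn P33 (Ici τ₀) →
      ContinuousOn P23 (Ici τ₀) → ContinuousOn P12 (Ici τ₀) → ContinuousOn P13 (Ici τ₀) →
      ContinuousOn Phat' (Ici τ₀) →
      -- the evolution equations
      (∀ τ ∈ Ici τ₀, HasDerivAt B
        ((decelParam B S22 S33 S12 S13 S23 s τ - 1 - S22 τ - S33 τ) * B τ) τ) →
      (∀ τ ∈ Ici τ₀, HasDerivAt S22
        ((decelParam B S22 S33 S12 S13 S23 s τ - 2) * S22 τ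
          - 2 * (S12 τ) ^ 2 + (B τ) ^ 2 / 3 + P22 τ) τ) →
      (∀ τ ∈ Ici τ₀, HasDerivAt S33
        ((decelParam B S22 S33 S12 S13 S23 s τ - 2) * S33 τ
          - 2 * (S13 τ) ^ 2 + (B τ) ^ 2 / 3 + P33 τ) τ) →
      (∀ τ ∈ Ici τ₀, HasDerivAt S23
        ((decelParam B S22 S33 S12 S13 S23 s τ - 2) * S23 τ
          - 2 * S12 τ * S13 τ + P23 τ) τ) →
      (∀ τ ∈ Ici τ₀, HasDerivAt S12
        ((decelParam B S22 S33 S12 S13 S23 s τ - 2) * S12 τ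
          + 2 * S12 τ * S22 τ + S12 τ * S33 τ + S13 τ * S23 τ + P12 τ) τ) →
      (∀ τ ∈ Ici τ₀, HasDerivAt S13
        ((decelParam B S22 S33 S12 S13 S23 s τ - 2) * S13 τ
          + 2 * S13 τ * S33 τ + S13 τ * S22 τ + S12 τ * S23 τ + P13 τ) τ) →
      (∀ τ ∈ Ici τ₀, HasDerivAt Phat (Phat' τ) τ) →
      (∀ τ ∈ Ici τ₀, Phat' τ ≤
        (-2 + 2 * Real.sqrt (shearScalar S22 S33 S12 S13 S23 τ)) * Phat τ) →
      -- positivity and energy conditions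
      (∀ τ ∈ Ici τ₀, 0 ≤ Phat τ) →
      (∀ τ ∈ Ici τ₀, 0 ≤ s τ) →
      (∀ τ ∈ Ici τ₀, s τ ≤ 3 * Phat τ) →
      (∀ τ ∈ Ici τ₀, |P22 τ| ≤ s τ) →
      (∀ τ ∈ Ici τ₀, |P33 τ| ≤ s τ) →
      (∀ τ ∈ Ici τ₀, |P23 τ| ≤ s τ) →
      (∀ τ ∈ Ici τ₀, |P12 τ| ≤ s τ) →
      (∀ τ ∈ Ici τ₀, |P13 τ| ≤ s τ) →
      -- the Hamiltonian constraint bound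
      (∀ τ ∈ Ici τ₀, (B τ) ^ 2 / 2 + shearScalar S22 S33 S12 S13 S23 τ / 2 ≤ 3) →
      -- small data
      ∀ ε : ℝ, 0 < ε → ε ≤ ε₀ →
      |B τ₀| ≤ ε → |S22 τ₀| ≤ ε → |S33 τ₀| ≤ ε →
      |S12 τ₀| ≤ ε → |S13 τ₀| ≤ ε → |S23 τ₀| ≤ ε → Phat τ₀ ≤ ε →
      -- conclusions: the decay rates
      ∀ τ ∈ Ici τ₀,
        |B τ| ≤ C * ε * Real.exp (-(τ - τ₀) / 2) ∧
        |S12 τ| ≤ C * ε * Real.exp (-3 * (τ - τ₀) / 2) ∧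
        |S13 τ| ≤ C * ε * Real.exp (-3 * (τ - τ₀) / 2) ∧
        |S23 τ| ≤ C * ε * Real.exp (-3 * (τ - τ₀) / 2) ∧
        |S22 τ - S33 τ| ≤ C * ε * Real.exp (-3 * (τ - τ₀) / 2) ∧
        |S22 τ + S33 τ| ≤ C * ε * Real.exp (-(τ - τ₀)) ∧
        Phat τ ≤ C * ε * Real.exp (-2 * (τ - τ₀)) := by
  obtain ⟨KP, hKP, hP⟩ := uniformlyDecays_Phat
  obtain ⟨KB, hKB, hB⟩ := uniformlyDecays_B_sq
  obtain ⟨KD, hKD, hD⟩ := uniformlyDecays_offDiagSq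
  obtain ⟨KX, hKX, hX⟩ := uniformlyDecays_diff_sq
  obtain ⟨KY, hKY, hY⟩ := uniformlyDecays_sum_sq
  refine ⟨1 / 20000, by norm_num, 1 + KP + KB + KD + KX + KY, by positivity, ?_⟩
  intro τ₀ B S22 S33 S12 S13 S23 Phat Phat' s P22 P33 P23 P12 P13 _ _ _ _ _ _ _
    hB' h22 h33 h23 h12 h13 hP' hP'le hP0 _ hs hp22 hp33 hp23 hp12 hp13 _
    ε _ hε hB₀ h22₀ h33₀ h12₀ h13₀ h23₀ hP₀ τ hτ
  let d : BianchiIData := ⟨B, S22, S33, S12, S13, S23, Phat, Phat', s, P22, P33, P23, P12, P13⟩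
  have h : d.IsSolution τ₀ := ⟨hB', h22, h33, h23, h12, h13, hP', hP'le, hP0, hs, hp22, hp33,
    hp23, hp12, hp13⟩
  have h0 : d.IsSmallData τ₀ ε := ⟨hε, hB₀, h22₀, h33₀, h12₀, h13₀, h23₀, hP₀⟩
  have hC : 1 ≤ 1 + KP + KB + KD + KX + KY := by linarith
  obtain ⟨h12D, h13D, h23D⟩ := d.sq_le_offDiagSq τ
  have hε0 := h0.eps_nonneg
  refine ⟨abs_le_mul_exp_of_sq_le (hB d τ₀ ε h h0 τ hτ) (by ring) (by linarith) hC hε0,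
    abs_le_mul_exp_of_sq_le (h12D.trans (hD d τ₀ ε h h0 τ hτ)) (by ring) (by linarith) hC hε0,
    abs_le_mul_exp_of_sq_le (h13D.trans (hD d τ₀ ε h h0 τ hτ)) (by ring) (by linarith) hC hε0,
    abs_le_mul_exp_of_sq_le (h23D.trans (hD d τ₀ ε h h0 τ hτ)) (by ring) (by linarith) hC hε0,
    abs_le_mul_exp_of_sq_le (hX d τ₀ ε h h0 τ hτ) (by ring) (by linarith) hC hε0,
    abs_le_mul_exp_of_sq_le (hY d τ₀ ε h h0 τ hτ) (by ring) (by linarith) hC hε0,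
    (hP d τ₀ ε h h0 τ hτ).trans ?_⟩
  rw [pow_one]
  gcongr
  linarith
end

section
/- Consider the Hubble-normalised Bianchi I Einstein–Vlasov–magnetic ODE system (see context). There exist ε₀ > 0 and C > 0 such that for every ε ∈ (0, ε₀], if |B(τ₀)| ≤ ε, |Σ₂₂(τ₀)| ≤ ε, |Σ₃₃(τ₀)| ≤ ε, |Σ₁₂(τ₀)| ≤ ε, |Σ₁₃(τ₀)| ≤ ε, |Σ₂₃(τ₀)| ≤ ε and P̂(τ₀) ≤ ε, then for all τ ≥ τ₀: |B(τ₀)|·e^{−(1/2 + Cε)(τ−τ₀)} ≤ |B(τ)| ≤ |B(τ₀)|·e^{−(1/2 − Cε)(τ−τ₀)}; in particular the decay rate e^{−τ/2} for B is optimal. -/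
/-!
Near the origin, `W = Σ₂₂² + Σ₃₃² + Σ₁₂² + Σ₁₃² + Σ₂₃² + 25 P̂² + 20 B⁴` is a strict Lyapunov
function: once `W ≤ δ²` with `δ ≤ 1/20`, the factor `q - 2 ≈ -3/2` damps the shear, `P̂` and `B²`
decay at rate about `2` and `1`, and the weights `25`, `20` let these dampings absorb the
couplings (the stresses `|Π| ≤ 3 P̂`, the magnetic source `B²/3`, the quadratic shear terms),
so that `W' ≤ -W`. Data of size `ε` therefore stay in `W ≤ (8ε)²` forever. There
`q ∈ [1/2, 1/2 + 8ε]` and `|Σ₂₂|, |Σ₃₃| ≤ 8ε`, so the rate `q - 1 - Σ₂₂ - Σ₃₃` in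
`B' = (q - 1 - Σ₂₂ - Σ₃₃) B` stays within `24ε` of `-1/2`, and Grönwall's inequality applied
to `B²` gives both bounds.
-/

open Real Set

theorem le_of_deriv_neg_at_level {f f' : ℝ → ℝ} {a c : ℝ}
    (hf : ∀ x ∈ Ici a, HasDerivAt f (f' x) x) (ha : f a ≤ c)
    (hc : ∀ x ∈ Ici a, f x = c → f' x < 0) : ∀ x ∈ Ici a, f x ≤ c := fun _ hx =>
  image_le_of_deriv_right_lt_deriv_boundary' (B := fun _ => c) (B' := 0)
    (fun y hy => (hf y hy.1).continuousAt.continuousWithinAt)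
    (fun y hy => (hf y hy.1).hasDerivWithinAt) ha continuousOn_const
    (fun _ _ => hasDerivWithinAt_const _ _ _) (fun y hy => hc y hy.1) ⟨hx, le_rfl⟩

theorem le_mul_exp_of_deriv_le_mul {u u' : ℝ → ℝ} {a k : ℝ}
    (hu : ∀ x ∈ Ici a, HasDerivAt u (u' x) x) (hk : ∀ x ∈ Ici a, u' x ≤ k * u x) :
    ∀ x ∈ Ici a, u x ≤ u a * exp (k * (x - a)) := fun x hx => by
  have h := le_gronwallBound_of_liminf_deriv_right_le (ε := 0)
    (fun y hy => (hu y hy.1).continuousAt.continuousWithinAt)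
    (fun y hy _ hr => (hu y hy.1).hasDerivWithinAt.liminf_right_slope_le hr) le_rfl
    (fun y hy => by simpa using hk y hy.1) x ⟨hx, le_rfl⟩
  rwa [gronwallBound_ε0] at h

theorem mul_exp_le_of_mul_le_deriv {u u' : ℝ → ℝ} {a k : ℝ}
    (hu : ∀ x ∈ Ici a, HasDerivAt u (u' x) x) (hk : ∀ x ∈ Ici a, k * u x ≤ u' x) :
    ∀ x ∈ Ici a, u a * exp (k * (x - a)) ≤ u x := fun x hx => by
  have h := le_mul_exp_of_deriv_le_mul (fun y hy => (hu y hy).neg)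
    (fun y hy => by simpa using hk y hy) x hx
  simp only [Pi.neg_apply, neg_mul] at h
  linarith

theorem hasDerivAt_sq_of_hasDerivAt_mul {f g : ℝ → ℝ} {x : ℝ} (hf : HasDerivAt f (g x * f x) x) :
    HasDerivAt (fun y => f y ^ 2) (2 * g x * f x ^ 2) x := by
  refine (hf.pow 2).congr_deriv ?_
  push_cast
  ring

theorem abs_le_abs_mul_exp_of_deriv_eq_mul {f g : ℝ → ℝ} {a k : ℝ}
    (hf : ∀ x ∈ Ici a, HasDerivAt f (g x * f x) x) (hg : ∀ x ∈ Ici a, g x ≤ k) :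
    ∀ x ∈ Ici a, |f x| ≤ |f a| * exp (k * (x - a)) := fun x hx => by
  have h := le_mul_exp_of_deriv_le_mul (fun y hy => hasDerivAt_sq_of_hasDerivAt_mul (hf y hy))
    (k := 2 * k) (fun y hy => by
      have := mul_le_mul_of_nonneg_right (hg y hy) (sq_nonneg (f y)); linarith) x hx
  rw [← sq_le_sq₀ (abs_nonneg _) (by positivity), mul_pow, sq_abs, sq_abs, ← exp_nat_mul]
  rwa [Nat.cast_ofNat, ← mul_assoc]

theorem abs_mul_exp_le_abs_of_deriv_eq_mul {f g : ℝ → ℝ} {a k : ℝ}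
    (hf : ∀ x ∈ Ici a, HasDerivAt f (g x * f x) x) (hg : ∀ x ∈ Ici a, k ≤ g x) :
    ∀ x ∈ Ici a, |f a| * exp (k * (x - a)) ≤ |f x| := fun x hx => by
  have h := mul_exp_le_of_mul_le_deriv (fun y hy => hasDerivAt_sq_of_hasDerivAt_mul (hf y hy))
    (k := 2 * k) (fun y hy => by
      have := mul_le_mul_of_nonneg_right (hg y hy) (sq_nonneg (f y)); linarith) x hx
  rw [← sq_le_sq₀ (by positivity) (abs_nonneg _), mul_pow, sq_abs, sq_abs, ← exp_nat_mul]
  rwa [Nat.cast_ofNat, ← mul_assoc]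

def shearSq (S22 S33 S12 S13 S23 : ℝ → ℝ) (τ : ℝ) : ℝ :=
  S22 τ ^ 2 + S33 τ ^ 2 + S12 τ ^ 2 + S13 τ ^ 2 + S23 τ ^ 2

def lyapunov (B S22 S33 S12 S13 S23 Phat : ℝ → ℝ) (τ : ℝ) : ℝ :=
  shearSq S22 S33 S12 S13 S23 τ + 25 * Phat τ ^ 2 + 20 * B τ ^ 4

noncomputable def lyapunovDeriv (B S22 S33 S12 S13 S23 s P22 P33 P23 P12 P13 Phat Phat' : ℝ → ℝ)
    (τ : ℝ) : ℝ :=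
  2 * (decelParam B S22 S33 S12 S13 S23 s τ - 2) * shearSq S22 S33 S12 S13 S23 τ
    + 2 * (S33 τ * S12 τ ^ 2 + S22 τ * S13 τ ^ 2) + 2 / 3 * (S22 τ + S33 τ) * B τ ^ 2
    + 2 * (S22 τ * P22 τ + S33 τ * P33 τ + S23 τ * P23 τ + S12 τ * P12 τ + S13 τ * P13 τ)
    + 50 * Phat τ * Phat' τ
    + 80 * (decelParam B S22 S33 S12 S13 S23 s τ - 1 - S22 τ - S33 τ) * B τ ^ 4

theorem two_mul_le_sq_add_sq_of_abs_le {x y m : ℝ} (h : |y| ≤ m) : 2 * x * y ≤ x ^ 2 + m ^ 2 := by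
  nlinarith [sq_nonneg (x - y), sq_abs y, abs_nonneg y]

section Estimates

variable {B S22 S33 S12 S13 S23 s P22 P33 P23 P12 P13 Phat Phat' : ℝ → ℝ} {τ δ : ℝ}

theorem shearScalar_le_three_mul_shearSq :
    shearScalar S22 S33 S12 S13 S23 τ ≤ 3 * shearSq S22 S33 S12 S13 S23 τ := by
  unfold shearScalar shearSq
  nlinarith [sq_nonneg (S22 τ - S33 τ), sq_nonneg (S12 τ), sq_nonneg (S13 τ), sq_nonneg (S23 τ)]

theorem shearSq_le_lyapunov :
    shearSq S22 S33 S12 S13 S23 τ ≤ lyapunov B S22 S33 S12 S13 S23 Phat τ := by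
  unfold lyapunov
  nlinarith [sq_nonneg (Phat τ), pow_nonneg (sq_nonneg (B τ)) 2]

theorem abs_S22_le_of_lyapunov_le (hW : lyapunov B S22 S33 S12 S13 S23 Phat τ ≤ δ ^ 2)
    (hδ : 0 ≤ δ) : |S22 τ| ≤ δ := by
  refine abs_le_of_sq_le_sq (le_trans ?_ (shearSq_le_lyapunov.trans hW)) hδ
  unfold shearSq
  nlinarith [sq_nonneg (S33 τ), sq_nonneg (S12 τ), sq_nonneg (S13 τ), sq_nonneg (S23 τ)]

theorem abs_S33_le_of_lyapunov_le (hW : lyapunov B S22 S33 S12 S13 S23 Phat τ ≤ δ ^ 2)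
    (hδ : 0 ≤ δ) : |S33 τ| ≤ δ := by
  refine abs_le_of_sq_le_sq (le_trans ?_ (shearSq_le_lyapunov.trans hW)) hδ
  unfold shearSq
  nlinarith [sq_nonneg (S22 τ), sq_nonneg (S12 τ), sq_nonneg (S13 τ), sq_nonneg (S23 τ)]

theorem five_mul_abs_Phat_le_of_lyapunov_le (hW : lyapunov B S22 S33 S12 S13 S23 Phat τ ≤ δ ^ 2)
    (hδ : 0 ≤ δ) : 5 * |Phat τ| ≤ δ := by
  rw [← abs_of_pos (by norm_num : (0 : ℝ) < 5), ← abs_mul]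
  refine abs_le_of_sq_le_sq (le_trans ?_ hW) hδ
  unfold lyapunov shearSq
  nlinarith [sq_nonneg (S22 τ), sq_nonneg (S33 τ), sq_nonneg (S12 τ),
    sq_nonneg (S13 τ), sq_nonneg (S23 τ), pow_nonneg (sq_nonneg (B τ)) 2]

theorem four_mul_sq_B_le_of_lyapunov_le (hW : lyapunov B S22 S33 S12 S13 S23 Phat τ ≤ δ ^ 2)
    (hδ : 0 ≤ δ) : 4 * B τ ^ 2 ≤ δ := by
  refine (sq_le_sq₀ (by positivity) hδ).1 (le_trans ?_ hW)
  unfold lyapunov shearSq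
  nlinarith [sq_nonneg (S22 τ), sq_nonneg (S33 τ), sq_nonneg (S12 τ),
    sq_nonneg (S13 τ), sq_nonneg (S23 τ), sq_nonneg (Phat τ), pow_nonneg (sq_nonneg (B τ)) 2]

theorem half_le_decelParam (hs : 0 ≤ s τ) : 1 / 2 ≤ decelParam B S22 S33 S12 S13 S23 s τ := by
  have : 0 ≤ shearScalar S22 S33 S12 S13 S23 τ / 4 + (s τ + B τ ^ 2 / 2) / 6 := by
    unfold shearScalar; positivity
  unfold decelParam; linarith

theorem decelParam_le_half_add (hs : s τ ≤ 3 * Phat τ)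
    (hW : lyapunov B S22 S33 S12 S13 S23 Phat τ ≤ δ ^ 2) (hδ : 0 ≤ δ) (hδ₁ : δ ≤ 1) :
    decelParam B S22 S33 S12 S13 S23 s τ ≤ 1 / 2 + δ := by
  have hF := shearScalar_le_three_mul_shearSq.trans
    (mul_le_mul_of_nonneg_left (shearSq_le_lyapunov.trans hW) zero_le_three)
  have hP := five_mul_abs_Phat_le_of_lyapunov_le hW hδ
  have hB := four_mul_sq_B_le_of_lyapunov_le hW hδ
  unfold decelParam
  nlinarith [le_abs_self (Phat τ)]

theorem abs_magneticRate_add_half_le (hs₀ : 0 ≤ s τ) (hs : s τ ≤ 3 * Phat τ)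
    (hW : lyapunov B S22 S33 S12 S13 S23 Phat τ ≤ δ ^ 2) (hδ : 0 ≤ δ) (hδ₁ : δ ≤ 1) :
    |decelParam B S22 S33 S12 S13 S23 s τ - 1 - S22 τ - S33 τ + 1 / 2| ≤ 3 * δ := by
  have hq := decelParam_le_half_add hs hW hδ hδ₁
  have hq₀ : 1 / 2 ≤ decelParam B S22 S33 S12 S13 S23 s τ := half_le_decelParam hs₀
  have h22 := abs_le.1 (abs_S22_le_of_lyapunov_le hW hδ)
  have h33 := abs_le.1 (abs_S33_le_of_lyapunov_le hW hδ)
  rw [abs_le]; constructor <;> linarith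

theorem lyapunovDeriv_le_neg_lyapunov (hs₀ : 0 ≤ s τ) (hs : s τ ≤ 3 * Phat τ)
    (h22 : |P22 τ| ≤ s τ) (h33 : |P33 τ| ≤ s τ) (h23 : |P23 τ| ≤ s τ) (h12 : |P12 τ| ≤ s τ)
    (h13 : |P13 τ| ≤ s τ) (hPhat₀ : 0 ≤ Phat τ)
    (hPhat' : Phat' τ ≤ (-2 + 2 * √(shearScalar S22 S33 S12 S13 S23 τ)) * Phat τ)
    (hW : lyapunov B S22 S33 S12 S13 S23 Phat τ ≤ δ ^ 2) (hδ : 0 ≤ δ) (hδ₁ : δ ≤ 1 / 20) :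
    lyapunovDeriv B S22 S33 S12 S13 S23 s P22 P33 P23 P12 P13 Phat Phat' τ
      ≤ -lyapunov B S22 S33 S12 S13 S23 Phat τ := by
  have hE : 0 ≤ shearSq S22 S33 S12 S13 S23 τ := by unfold shearSq; positivity
  have hEδ := shearSq_le_lyapunov.trans hW
  have hS22 := abs_le.1 (abs_S22_le_of_lyapunov_le hW hδ)
  have hS33 := abs_le.1 (abs_S33_le_of_lyapunov_le hW hδ)
  have hshear : 2 * (decelParam B S22 S33 S12 S13 S23 s τ - 2) * shearSq S22 S33 S12 S13 S23 τ
      ≤ -(29 / 10) * shearSq S22 S33 S12 S13 S23 τ := by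
    have := decelParam_le_half_add hs hW hδ (by linarith)
    nlinarith
  have hcubic : 2 * (S33 τ * S12 τ ^ 2 + S22 τ * S13 τ ^ 2)
      ≤ shearSq S22 S33 S12 S13 S23 τ / 10 := by
    unfold shearSq
    nlinarith [mul_le_mul_of_nonneg_right hS33.2 (sq_nonneg (S12 τ)),
      mul_le_mul_of_nonneg_right hS22.2 (sq_nonneg (S13 τ)), sq_nonneg (S22 τ), sq_nonneg (S33 τ),
      sq_nonneg (S23 τ)]
  have hsource : 2 / 3 * (S22 τ + S33 τ) * B τ ^ 2
      ≤ shearSq S22 S33 S12 S13 S23 τ / 3 + 2 / 3 * B τ ^ 4 := by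
    unfold shearSq
    nlinarith [sq_nonneg (S22 τ - B τ ^ 2), sq_nonneg (S33 τ - B τ ^ 2), sq_nonneg (S12 τ),
      sq_nonneg (S13 τ), sq_nonneg (S23 τ)]
  have hstress : 2 * (S22 τ * P22 τ + S33 τ * P33 τ + S23 τ * P23 τ + S12 τ * P12 τ
      + S13 τ * P13 τ) ≤ shearSq S22 S33 S12 S13 S23 τ + 45 * Phat τ ^ 2 := by
    have bound (x y : ℝ) (h : |y| ≤ s τ) : 2 * x * y ≤ x ^ 2 + (3 * Phat τ) ^ 2 :=
      two_mul_le_sq_add_sq_of_abs_le (h.trans hs)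
    unfold shearSq
    linarith [bound (S22 τ) _ h22, bound (S33 τ) _ h33, bound (S23 τ) _ h23,
      bound (S12 τ) _ h12, bound (S13 τ) _ h13]
  have hdispersion : 50 * Phat τ * Phat' τ ≤ -90 * Phat τ ^ 2 := by
    have hF : √(shearScalar S22 S33 S12 S13 S23 τ) ≤ 1 / 10 := by
      refine (sqrt_le_left (by norm_num)).2 ?_
      have : shearScalar S22 S33 S12 S13 S23 τ ≤ 3 * shearSq S22 S33 S12 S13 S23 τ :=
        shearScalar_le_three_mul_shearSq
      nlinarith
    nlinarith [mul_le_mul_of_nonneg_left hPhat' hPhat₀]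
  have hmagnetic : 80 * (decelParam B S22 S33 S12 S13 S23 s τ - 1 - S22 τ - S33 τ) * B τ ^ 4
      ≤ -28 * B τ ^ 4 := by
    have := (abs_le.1 (abs_magneticRate_add_half_le hs₀ hs hW hδ (by linarith))).2
    nlinarith [pow_nonneg (sq_nonneg (B τ)) 2]
  unfold lyapunovDeriv lyapunov
  nlinarith [sq_nonneg (Phat τ), pow_nonneg (sq_nonneg (B τ)) 2]

theorem hasDerivAt_lyapunov
    (hB : HasDerivAt B ((decelParam B S22 S33 S12 S13 S23 s τ - 1 - S22 τ - S33 τ) * B τ) τ)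
    (hS22 : HasDerivAt S22 ((decelParam B S22 S33 S12 S13 S23 s τ - 2) * S22 τ
      - 2 * S12 τ ^ 2 + B τ ^ 2 / 3 + P22 τ) τ)
    (hS33 : HasDerivAt S33 ((decelParam B S22 S33 S12 S13 S23 s τ - 2) * S33 τ
      - 2 * S13 τ ^ 2 + B τ ^ 2 / 3 + P33 τ) τ)
    (hS23 : HasDerivAt S23 ((decelParam B S22 S33 S12 S13 S23 s τ - 2) * S23 τ
      - 2 * S12 τ * S13 τ + P23 τ) τ)
    (hS12 : HasDerivAt S12 ((decelParam B S22 S33 S12 S13 S23 s τ - 2) * S12 τ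
      + 2 * S12 τ * S22 τ + S12 τ * S33 τ + S13 τ * S23 τ + P12 τ) τ)
    (hS13 : HasDerivAt S13 ((decelParam B S22 S33 S12 S13 S23 s τ - 2) * S13 τ
      + 2 * S13 τ * S33 τ + S13 τ * S22 τ + S12 τ * S23 τ + P13 τ) τ)
    (hPhat : HasDerivAt Phat (Phat' τ) τ) :
    HasDerivAt (lyapunov B S22 S33 S12 S13 S23 Phat)
      (lyapunovDeriv B S22 S33 S12 S13 S23 s P22 P33 P23 P12 P13 Phat Phat' τ) τ := by
  have h := (((((hS22.pow 2).add (hS33.pow 2)).add (hS12.pow 2)).add (hS13.pow 2)).add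
    (hS23.pow 2)).add ((hPhat.pow 2).const_mul 25) |>.add ((hB.pow 4).const_mul 20)
  refine h.congr_deriv ?_
  unfold lyapunovDeriv shearSq
  push_cast
  ring

theorem lyapunov_le_of_abs_le {ε : ℝ} (hε : ε ≤ 1) (hB : |B τ| ≤ ε) (h22 : |S22 τ| ≤ ε)
    (h33 : |S33 τ| ≤ ε) (h12 : |S12 τ| ≤ ε) (h13 : |S13 τ| ≤ ε) (h23 : |S23 τ| ≤ ε)
    (hPhat₀ : 0 ≤ Phat τ) (hPhat : Phat τ ≤ ε) :
    lyapunov B S22 S33 S12 S13 S23 Phat τ ≤ (8 * ε) ^ 2 := by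
  have hε₀ : 0 ≤ ε := (abs_nonneg _).trans hB
  have sq_le {x : ℝ} (h : |x| ≤ ε) : x ^ 2 ≤ ε ^ 2 := sq_le_sq' (abs_le.1 h).1 (abs_le.1 h).2
  have hB4 : B τ ^ 4 ≤ ε ^ 2 := by
    have hB2 := sq_le hB
    have hε2 : ε ^ 2 ≤ 1 := by nlinarith
    nlinarith [sq_nonneg (B τ)]
  unfold lyapunov shearSq
  nlinarith [sq_le h22, sq_le h33, sq_le h12, sq_le h13, sq_le h23,
    sq_le (abs_le.2 ⟨by linarith, hPhat⟩)]

end Estimates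

/-- Two-sided small-data decay estimate for the Hubble-normalised magnetic
field `B` in the Bianchi I Einstein–Vlasov system with a pure magnetic field:
the decay rate `e^{-τ/2}` is optimal. -/
theorem bianchiI_magnetic_field_optimal_decay :
    ∃ ε₀ > (0 : ℝ), ∃ C > (0 : ℝ),
      ∀ (τ₀ : ℝ) (B S22 S33 S12 S13 S23 Phat Phat' s P22 P33 P23 P12 P13 : ℝ → ℝ),
      -- continuity of the normalised kinetic stresses and of the derivative of P̂
      ContinuousOn s (Ici τ₀) → ContinuousOn P22 (Ici τ₀) → ContinuousOn P33 (Ici τ₀) →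
      ContinuousOn P23 (Ici τ₀) → ContinuousOn P12 (Ici τ₀) → ContinuousOn P13 (Ici τ₀) →
      ContinuousOn Phat' (Ici τ₀) →
      -- the evolution equations
      (∀ τ ∈ Ici τ₀, HasDerivAt B
        ((decelParam B S22 S33 S12 S13 S23 s τ - 1 - S22 τ - S33 τ) * B τ) τ) →
      (∀ τ ∈ Ici τ₀, HasDerivAt S22
        ((decelParam B S22 S33 S12 S13 S23 s τ - 2) * S22 τ
          - 2 * (S12 τ) ^ 2 + (B τ) ^ 2 / 3 + P22 τ) τ) →
      (∀ τ ∈ Ici τ₀, HasDerivAt S33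
        ((decelParam B S22 S33 S12 S13 S23 s τ - 2) * S33 τ
          - 2 * (S13 τ) ^ 2 + (B τ) ^ 2 / 3 + P33 τ) τ) →
      (∀ τ ∈ Ici τ₀, HasDerivAt S23
        ((decelParam B S22 S33 S12 S13 S23 s τ - 2) * S23 τ
          - 2 * S12 τ * S13 τ + P23 τ) τ) →
      (∀ τ ∈ Ici τ₀, HasDerivAt S12
        ((decelParam B S22 S33 S12 S13 S23 s τ - 2) * S12 τ
          + 2 * S12 τ * S22 τ + S12 τ * S33 τ + S13 τ * S23 τ + P12 τ) τ) →
      (∀ τ ∈ Ici τ₀, HasDerivAt S13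
        ((decelParam B S22 S33 S12 S13 S23 s τ - 2) * S13 τ
          + 2 * S13 τ * S33 τ + S13 τ * S22 τ + S12 τ * S23 τ + P13 τ) τ) →
      (∀ τ ∈ Ici τ₀, HasDerivAt Phat (Phat' τ) τ) →
      (∀ τ ∈ Ici τ₀, Phat' τ ≤
        (-2 + 2 * Real.sqrt (shearScalar S22 S33 S12 S13 S23 τ)) * Phat τ) →
      -- positivity and energy conditions
      (∀ τ ∈ Ici τ₀, 0 ≤ Phat τ) →
      (∀ τ ∈ Ici τ₀, 0 ≤ s τ) →
      (∀ τ ∈ Ici τ₀, s τ ≤ 3 * Phat τ) →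
      (∀ τ ∈ Ici τ₀, |P22 τ| ≤ s τ) →
      (∀ τ ∈ Ici τ₀, |P33 τ| ≤ s τ) →
      (∀ τ ∈ Ici τ₀, |P23 τ| ≤ s τ) →
      (∀ τ ∈ Ici τ₀, |P12 τ| ≤ s τ) →
      (∀ τ ∈ Ici τ₀, |P13 τ| ≤ s τ) →
      -- the Hamiltonian constraint bound
      (∀ τ ∈ Ici τ₀, (B τ) ^ 2 / 2 + shearScalar S22 S33 S12 S13 S23 τ / 2 ≤ 3) →
      -- small data
      ∀ ε : ℝ, 0 < ε → ε ≤ ε₀ →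
      |B τ₀| ≤ ε → |S22 τ₀| ≤ ε → |S33 τ₀| ≤ ε →
      |S12 τ₀| ≤ ε → |S13 τ₀| ≤ ε → |S23 τ₀| ≤ ε → Phat τ₀ ≤ ε →
      -- conclusion: two-sided (optimal) bounds on the magnetic field
      ∀ τ ∈ Ici τ₀,
        |B τ₀| * Real.exp (-(1 / 2 + C * ε) * (τ - τ₀)) ≤ |B τ| ∧
        |B τ| ≤ |B τ₀| * Real.exp (-(1 / 2 - C * ε) * (τ - τ₀)) := by
  refine ⟨1 / 160, by norm_num, 24, by norm_num, ?_⟩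
  intro τ₀ B S22 S33 S12 S13 S23 Phat Phat' s P22 P33 P23 P12 P13 _ _ _ _ _ _ _
    hB hS22 hS33 hS23 hS12 hS13 hPhat hPhat' hPhat₀ hs₀ hs h22 h33 h23 h12 h13 _
    ε hε hεε₀ hB₀ hS22₀ hS33₀ hS12₀ hS13₀ hS23₀ hPhat₀ε
  have hδ : 0 ≤ 8 * ε := by linarith
  have hW : ∀ τ ∈ Ici τ₀, lyapunov B S22 S33 S12 S13 S23 Phat τ ≤ (8 * ε) ^ 2 :=
    le_of_deriv_neg_at_level
      (fun τ hτ => hasDerivAt_lyapunov (hB τ hτ) (hS22 τ hτ) (hS33 τ hτ) (hS23 τ hτ)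
        (hS12 τ hτ) (hS13 τ hτ) (hPhat τ hτ))
      (lyapunov_le_of_abs_le (by linarith) hB₀ hS22₀ hS33₀ hS12₀ hS13₀ hS23₀
        (hPhat₀ τ₀ self_mem_Ici) hPhat₀ε)
      (fun τ hτ hWτ => by
        have := lyapunovDeriv_le_neg_lyapunov (hs₀ τ hτ) (hs τ hτ) (h22 τ hτ) (h33 τ hτ)
          (h23 τ hτ) (h12 τ hτ) (h13 τ hτ) (hPhat₀ τ hτ) (hPhat' τ hτ) hWτ.le hδ (by linarith)
        nlinarith)
  have hrate (τ : ℝ) (hτ : τ ∈ Ici τ₀) := abs_le.1 (abs_magneticRate_add_half_le (hs₀ τ hτ)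
    (hs τ hτ) (hW τ hτ) hδ (by linarith))
  intro τ hτ
  exact ⟨abs_mul_exp_le_abs_of_deriv_eq_mul hB (fun x hx => by linarith [(hrate x hx).1]) τ hτ,
    abs_le_abs_mul_exp_of_deriv_eq_mul hB (fun x hx => by linarith [(hrate x hx).2]) τ hτ⟩
end

section
/- Let t₀ > 0, K ≥ 0, and let H : [t₀,∞) → (0,∞) be continuously differentiable with H(t₀) = 2/(3t₀), and suppose there is a continuous function r : [t₀,∞) → ℝ with 0 ≤ r(t) ≤ K·t^{−2/3} such that −H'(t)/H(t)² = 3/2 + r(t) for all t ≥ t₀. Then for all t ≥ t₀: |H(t) − (2/3)·t^{−1}| ≤ (4/3)·K·t^{−5/3}. -/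
open Real Set

/-! The inverse `u = 1/H` satisfies `u' = 3/2 + r`, so `u(t₀) = 3t₀/2` and
`0 ≤ r ≤ K t^{-2/3}` squeeze `u(t)` between `3t/2` and `3t/2 + 3K t^{1/3}`;
inverting, `H(t)` lies within `3K t^{1/3} / (3t/2)² = (4/3) K t^{-5/3}` of `2/(3t)`. -/

theorem sub_le_sub_of_hasDerivAt_le {D : Set ℝ} (hD : Convex ℝ D) {f g f' g' : ℝ → ℝ}
    (hf : ∀ x ∈ D, HasDerivAt f (f' x) x) (hg : ∀ x ∈ D, HasDerivAt g (g' x) x)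
    (hle : ∀ x ∈ D, f' x ≤ g' x) {a b : ℝ} (ha : a ∈ D) (hb : b ∈ D) (hab : a ≤ b) :
    f b - f a ≤ g b - g a := by
  have hmono : MonotoneOn (g - f) D :=
    monotoneOn_of_hasDerivWithinAt_nonneg (f' := g' - f') hD
      (fun x hx ↦ ((hg x hx).sub (hf x hx)).continuousAt.continuousWithinAt)
      (fun x hx ↦ ((hg x (interior_subset hx)).sub (hf x (interior_subset hx))).hasDerivWithinAt)
      (fun x hx ↦ sub_nonneg.2 (hle x (interior_subset hx)))
  have := hmono ha hb hab
  simp only [Pi.sub_apply] at this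
  linarith

theorem abs_inv_sub_inv_le_of_le_of_le {a u δ : ℝ} (ha : 0 < a) (hau : a ≤ u)
    (hu : u ≤ a + δ) : |u⁻¹ - a⁻¹| ≤ δ / a ^ 2 := by
  have hu₀ : 0 < u := ha.trans_le hau
  rw [abs_sub_comm, abs_of_nonneg (sub_nonneg.2 (inv_anti₀ ha hau)), inv_sub_inv ha.ne' hu₀.ne',
    sq]
  exact div_le_div₀ (by linarith) (by linarith) (by positivity)
    (mul_le_mul_of_nonneg_left hau ha.le)

theorem hasDerivAt_const_mul_rpow_one_third (c : ℝ) {x : ℝ} (hx : x ≠ 0) :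
    HasDerivAt (fun y : ℝ ↦ 3 * c * y ^ ((1 : ℝ) / 3)) (c * x ^ (-(2 : ℝ) / 3)) x := by
  refine ((hasDerivAt_rpow_const (p := (1 : ℝ) / 3) (Or.inl hx)).const_mul (3 * c)).congr_deriv ?_
  rw [show (1 : ℝ) / 3 - 1 = -(2 : ℝ) / 3 by norm_num]
  ring

theorem rpow_one_third_div_sq {t : ℝ} (ht : 0 < t) :
    t ^ ((1 : ℝ) / 3) / t ^ 2 = t ^ (-(5 : ℝ) / 3) := by
  rw [← rpow_two, ← rpow_sub ht]
  norm_num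

theorem hubble_dust_asymptotics_general
    (t₀ K : ℝ) (ht₀ : 0 < t₀) (hK : 0 ≤ K)
    (H H' r : ℝ → ℝ)
    (hH_pos : ∀ t ∈ Ici t₀, 0 < H t)
    (hH_deriv : ∀ t ∈ Ici t₀, HasDerivAt H (H' t) t)
    (hr_nonneg : ∀ t ∈ Ici t₀, 0 ≤ r t)
    (hr_bound : ∀ t ∈ Ici t₀, r t ≤ K * t ^ (-(2 : ℝ) / 3))
    (hH_init : H t₀ = 2 / (3 * t₀))
    (hray : ∀ t ∈ Ici t₀, -(H' t) / (H t) ^ 2 = 3 / 2 + r t) :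
    ∀ t ∈ Ici t₀, |H t - 2 / 3 * t⁻¹| ≤ 4 / 3 * K * t ^ (-(5 : ℝ) / 3) := by
  intro t ht
  have htpos : 0 < t := ht₀.trans_le ht
  have hu : ∀ x ∈ Ici t₀, HasDerivAt (fun y ↦ (H y)⁻¹) (3 / 2 + r x) x := fun x hx ↦
    hray x hx ▸ (hH_deriv x hx).inv (hH_pos x hx).ne'
  have hu₀ : (H t₀)⁻¹ = 3 / 2 * t₀ := by rw [hH_init]; field_simp
  have hlin (x : ℝ) : HasDerivAt (fun y : ℝ ↦ 3 / 2 * y) (3 / 2) x := by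
    simpa using (hasDerivAt_id x).const_mul (3 / 2 : ℝ)
  have hlow := sub_le_sub_of_hasDerivAt_le (convex_Ici t₀) (fun x _ ↦ hlin x) hu
    (fun x hx ↦ by linarith [hr_nonneg x hx]) self_mem_Ici ht ht
  have hup := sub_le_sub_of_hasDerivAt_le (convex_Ici t₀) hu
    (fun x hx ↦ (hlin x).add (hasDerivAt_const_mul_rpow_one_third K (ht₀.trans_le hx).ne'))
    (fun x hx ↦ by linarith [hr_bound x hx]) self_mem_Ici ht ht
  have hinit_term : 0 ≤ 3 * K * t₀ ^ ((1 : ℝ) / 3) := by positivity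
  simp only [hu₀, Pi.add_apply] at hlow hup
  calc |H t - 2 / 3 * t⁻¹| = |(H t)⁻¹⁻¹ - (3 / 2 * t)⁻¹| := by
        rw [inv_inv, mul_inv, inv_div]
    _ ≤ 3 * K * t ^ ((1 : ℝ) / 3) / (3 / 2 * t) ^ 2 :=
        abs_inv_sub_inv_le_of_le_of_le (by positivity) (by linarith) (by linarith)
    _ = 4 / 3 * K * (t ^ ((1 : ℝ) / 3) / t ^ 2) := by ring
    _ = 4 / 3 * K * t ^ (-(5 : ℝ) / 3) := by rw [rpow_one_third_div_sq htpos]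

/-- Dust-like asymptotics of the Hubble scalar: if `-H'/H² = 3/2 + r` with
`0 ≤ r(t) ≤ K·t^{-2/3}` and `H(t₀) = 2/(3t₀)`, then
`|H(t) - (2/3)t⁻¹| ≤ (4/3)·K·t^{-5/3}`. -/
theorem hubble_dust_asymptotics
    (t₀ K : ℝ) (ht₀ : 0 < t₀) (hK : 0 ≤ K)
    (H H' r : ℝ → ℝ)
    (hH_pos : ∀ t ∈ Ici t₀, 0 < H t)
    (hH_deriv : ∀ t ∈ Ici t₀, HasDerivAt H (H' t) t)
    (hH'_cont : ContinuousOn H' (Ici t₀))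
    (hr_cont : ContinuousOn r (Ici t₀))
    (hr_nonneg : ∀ t ∈ Ici t₀, 0 ≤ r t)
    (hr_bound : ∀ t ∈ Ici t₀, r t ≤ K * t ^ (-(2 : ℝ) / 3))
    (hH_init : H t₀ = 2 / (3 * t₀))
    (hray : ∀ t ∈ Ici t₀, -(H' t) / (H t) ^ 2 = 3 / 2 + r t) :
    ∀ t ∈ Ici t₀, |H t - 2 / 3 * t⁻¹| ≤ 4 / 3 * K * t ^ (-(5 : ℝ) / 3) :=
  hubble_dust_asymptotics_general t₀ K ht₀ hK H H' r hH_pos hH_deriv hr_nonneg hr_bound hH_init hray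
end

section
/- Let a > 0, t₀ ∈ ℝ, and let H : [t₀,∞) → ℝ be continuously differentiable with H(t) ≥ a and H'(t) ≤ −H(t)² + a² for all t ≥ t₀. Then for all t ≥ t₀: H(t) − a ≤ (H(t₀) − a)·e^{−2a(t−t₀)}. -/
open Real Set

/- Since `-H² + a² = -2a (H - a) - (H - a)²`, the function `H - a` satisfies the linear
differential inequality `(H - a)' ≤ -2a (H - a)`, and Grönwall's inequality gives the decay. -/

theorem le_mul_exp_of_hasDerivAt_le_mul_self {f f' : ℝ → ℝ} {K t₀ : ℝ}
    (hf : ∀ t ∈ Ici t₀, HasDerivAt f (f' t) t) (bound : ∀ t ∈ Ici t₀, f' t ≤ K * f t) :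
    ∀ t ∈ Ici t₀, f t ≤ f t₀ * exp (K * (t - t₀)) := by
  intro t ht
  rw [← gronwallBound_ε0]
  refine le_gronwallBound_of_liminf_deriv_right_le
    (fun s hs => (hf s hs.1).continuousAt.continuousWithinAt)
    (fun s hs _ hr => (hf s hs.1).hasDerivWithinAt.liminf_right_slope_le hr) le_rfl
    (fun s hs => by simpa using bound s hs.1) t ⟨ht, le_rfl⟩

theorem de_sitter_ode_comparison_general
    (a t₀ : ℝ)
    (H H' : ℝ → ℝ)
    (hH_deriv : ∀ t ∈ Ici t₀, HasDerivAt H (H' t) t)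
    (hH_ineq : ∀ t ∈ Ici t₀, H' t ≤ -(H t) ^ 2 + a ^ 2) :
    ∀ t ∈ Ici t₀, H t - a ≤ (H t₀ - a) * Real.exp (-2 * a * (t - t₀)) :=
  le_mul_exp_of_hasDerivAt_le_mul_self (fun t ht => (hH_deriv t ht).sub_const a)
    fun t ht => by nlinarith [hH_ineq t ht, sq_nonneg (H t - a)]

/-- ODE comparison for de Sitter-like asymptotics: if `H ≥ a` and
`H' ≤ -H² + a²`, then `H` converges to `a` exponentially at rate `2a`. -/
theorem de_sitter_ode_comparison
    (a t₀ : ℝ) (ha : 0 < a)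
    (H H' : ℝ → ℝ)
    (hH_deriv : ∀ t ∈ Ici t₀, HasDerivAt H (H' t) t)
    (hH'_cont : ContinuousOn H' (Ici t₀))
    (hH_lower : ∀ t ∈ Ici t₀, a ≤ H t)
    (hH_ineq : ∀ t ∈ Ici t₀, H' t ≤ -(H t) ^ 2 + a ^ 2) :
    ∀ t ∈ Ici t₀, H t - a ≤ (H t₀ - a) * Real.exp (-2 * a * (t - t₀)) :=
  de_sitter_ode_comparison_general a t₀ H H' hH_deriv hH_ineq
end

section
/- Consider the Bianchi I Einstein–Vlasov–magnetic system with positive cosmological constant, reduced to its scalar equations (see context). Then H'(t) ≤ −H(t)² + Λ/3 ≤ 0 and H(t) ≥ √(Λ/3) for all t ≥ t₀; in particular H is nonincreasing and remains positive. -/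
open Real Set

/-! The Hamiltonian constraint expresses `3H²` as `Λ` plus nonnegative terms, so `H² ≥ Λ/3 > 0`
and `H` never vanishes; being continuous and initially positive, `H` stays positive, hence
`H ≥ √(Λ/3)`. The Raychaudhuri equation writes `H'` as `-H² + Λ/3` minus nonnegative terms. -/

theorem IsPreconnected.pos_of_ne_zero {α : Type*} [TopologicalSpace α] {s : Set α} {f : α → ℝ}
    (hs : IsPreconnected s) (hf : ContinuousOn f s) (hf₀ : ∀ x ∈ s, f x ≠ 0) {a : α}
    (ha : a ∈ s) (hfa : 0 < f a) : ∀ x ∈ s, 0 < f x := by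
  intro x hx
  by_contra! hfx
  obtain ⟨y, hy, hfy⟩ := hs.intermediate_value hx ha hf ⟨hfx, hfa.le⟩
  exact hf₀ y hy hfy

theorem hubble_sq_ge_of_hamiltonian_constraint {Λ H s h ρ : ℝ} (hs : 0 ≤ s) (hρ : 0 ≤ ρ)
    (hconstraint : ρ + h ^ 2 / 2 + Λ = 3 * H ^ 2 - s / 2) : Λ / 3 ≤ H ^ 2 := by
  nlinarith [sq_nonneg h]

theorem hubble_deriv_le_of_raychaudhuri {Λ H H' s h ρ S : ℝ} (hs : 0 ≤ s) (hρ : 0 ≤ ρ)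
    (hS : 0 ≤ S) (hray : H' = -H ^ 2 - s / 3 - (ρ + S + h ^ 2 - 2 * Λ) / 6) :
    H' ≤ -H ^ 2 + Λ / 3 := by
  nlinarith [sq_nonneg h]

theorem lambda_system_hubble_monotone_general
    (Λ t₀ : ℝ) (hΛ : 0 < Λ)
    (H H' s h ρ S : ℝ → ℝ)
    (hH_deriv : ∀ t ∈ Ici t₀, HasDerivAt H (H' t) t)
    (hs_nonneg : ∀ t ∈ Ici t₀, 0 ≤ s t)
    (hρ_nonneg : ∀ t ∈ Ici t₀, 0 ≤ ρ t)
    (hS_bounds : ∀ t ∈ Ici t₀, 0 ≤ S t ∧ S t ≤ ρ t)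
    (hray : ∀ t ∈ Ici t₀,
      H' t = -(H t) ^ 2 - s t / 3 - (ρ t + S t + (h t) ^ 2 - 2 * Λ) / 6)
    (hconstraint : ∀ t ∈ Ici t₀,
      ρ t + (h t) ^ 2 / 2 + Λ = 3 * (H t) ^ 2 - s t / 2)
    (hH_init : 0 < H t₀) :
    ∀ t ∈ Ici t₀,
      H' t ≤ -(H t) ^ 2 + Λ / 3 ∧ -(H t) ^ 2 + Λ / 3 ≤ 0 ∧
        Real.sqrt (Λ / 3) ≤ H t := by
  have hsq : ∀ t ∈ Ici t₀, Λ / 3 ≤ H t ^ 2 := fun t ht =>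
    hubble_sq_ge_of_hamiltonian_constraint (hs_nonneg t ht) (hρ_nonneg t ht) (hconstraint t ht)
  have hH_cont : ContinuousOn H (Ici t₀) := fun t ht =>
    (hH_deriv t ht).continuousAt.continuousWithinAt
  have hH_ne : ∀ t ∈ Ici t₀, H t ≠ 0 := fun t ht hHt => by
    have := hsq t ht
    rw [hHt] at this
    linarith
  have hH_pos : ∀ t ∈ Ici t₀, 0 < H t :=
    isPreconnected_Ici.pos_of_ne_zero hH_cont hH_ne (mem_Ici.mpr le_rfl) hH_init
  intro t ht
  refine ⟨?_, by linarith [hsq t ht], ?_⟩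
  · exact hubble_deriv_le_of_raychaudhuri (hs_nonneg t ht) (hρ_nonneg t ht)
      (hS_bounds t ht).1 (hray t ht)
  · exact Real.sqrt_le_iff.mpr ⟨(hH_pos t ht).le, hsq t ht⟩

/-- For the Bianchi I Einstein–Vlasov system with a pure magnetic field and a
positive cosmological constant, the Raychaudhuri equation and the Hamiltonian
constraint give `H' ≤ -H² + Λ/3 ≤ 0` and `H ≥ √(Λ/3)`: the Hubble scalar is
nonincreasing and stays positive. -/
theorem lambda_system_hubble_monotone
    (Λ t₀ : ℝ) (hΛ : 0 < Λ)
    (H H' s h ρ S : ℝ → ℝ)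
    (hH_deriv : ∀ t ∈ Ici t₀, HasDerivAt H (H' t) t)
    (hH'_cont : ContinuousOn H' (Ici t₀))
    (hs_cont : ContinuousOn s (Ici t₀)) (hh_cont : ContinuousOn h (Ici t₀))
    (hρ_cont : ContinuousOn ρ (Ici t₀)) (hS_cont : ContinuousOn S (Ici t₀))
    (hs_nonneg : ∀ t ∈ Ici t₀, 0 ≤ s t)
    (hρ_nonneg : ∀ t ∈ Ici t₀, 0 ≤ ρ t)
    (hS_bounds : ∀ t ∈ Ici t₀, 0 ≤ S t ∧ S t ≤ ρ t)
    (hray : ∀ t ∈ Ici t₀,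
      H' t = -(H t) ^ 2 - s t / 3 - (ρ t + S t + (h t) ^ 2 - 2 * Λ) / 6)
    (hconstraint : ∀ t ∈ Ici t₀,
      ρ t + (h t) ^ 2 / 2 + Λ = 3 * (H t) ^ 2 - s t / 2)
    (hH_init : 0 < H t₀) :
    ∀ t ∈ Ici t₀,
      H' t ≤ -(H t) ^ 2 + Λ / 3 ∧ -(H t) ^ 2 + Λ / 3 ≤ 0 ∧
        Real.sqrt (Λ / 3) ≤ H t :=
  lambda_system_hubble_monotone_general Λ t₀ hΛ H H' s h ρ S hH_deriv hs_nonneg hρ_nonneg hS_bounds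
    hray hconstraint hH_init
end

section
/- Consider the Bianchi I Einstein–Vlasov–magnetic system with positive cosmological constant, reduced to its scalar equations (see context). Then there exists a constant C ≥ 0 such that for all t ≥ t₀: 0 ≤ H(t) − √(Λ/3) ≤ C·e^{−2√(Λ/3)·t}; s(t)/H(t)² ≤ C·e^{−2√(Λ/3)·t}; h(t)²/H(t)² ≤ C·e^{−2√(Λ/3)·t}; and the deceleration parameter q(t) = −1 − H'(t)/H(t)² satisfies |q(t) + 1| ≤ C·e^{−2√(Λ/3)·t}. -/
/-!
The constraint gives `3H² ≥ Λ`, so `H`, which starts positive, stays above `γ = √(Λ/3)`; it also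
bounds `s` and `h²` by `6(H² - γ²)`. Substituted into the Raychaudhuri equation it yields
`H' ≤ -(3/2)(H² - γ²) ≤ -2γ(H - γ)`, and Grönwall gives `H - γ = O(e^{-2γt})`. Finally `s`, `h²`
and `-H'` are all at most `6(H² - γ²) ≤ 12H(H - γ)`, and dividing by `H² ≥ γH` gives their decay.
-/

open Real Set

theorem le_mul_exp_of_hasDerivAt_le_mul {f f' : ℝ → ℝ} {K a : ℝ}
    (hf : ∀ x ∈ Ici a, HasDerivAt f (f' x) x) (bound : ∀ x ∈ Ici a, f' x ≤ K * f x) :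
    ∀ x ∈ Ici a, f x ≤ f a * exp (K * (x - a)) := by
  intro x hx
  have hIcc : Icc a x ⊆ Ici a := Icc_subset_Ici_self
  have hIco : Ico a x ⊆ Ici a := Ico_subset_Ici_self
  have := le_gronwallBound_of_liminf_deriv_right_le (f' := f') (δ := f a) (ε := 0)
    (fun y hy => (hf y (hIcc hy)).continuousAt.continuousWithinAt)
    (fun y hy _ hr => (hf y (hIco hy)).hasDerivWithinAt.liminf_right_slope_le hr)
    le_rfl (fun y hy => by simpa using bound y (hIco hy)) x ⟨hx, le_rfl⟩
  rwa [gronwallBound_ε0] at this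

theorem le_of_sq_le_sq_of_continuousOn {f : ℝ → ℝ} {a γ : ℝ} (hf : ContinuousOn f (Ici a))
    (ha : 0 < f a) (hγ : 0 < γ) (hsq : ∀ t ∈ Ici a, γ ^ 2 ≤ f t ^ 2) :
    ∀ t ∈ Ici a, γ ≤ f t := by
  intro t ht
  by_contra! hlt
  have hneg : f t < 0 := by nlinarith [hsq t ht]
  obtain ⟨c, hc, hc0⟩ := intermediate_value_Icc' (mem_Ici.mp ht) (hf.mono Icc_subset_Ici_self)
    ⟨hneg.le, ha.le⟩
  have := hsq c (Icc_subset_Ici_self hc)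
  rw [hc0] at this
  nlinarith

theorem div_sq_le_of_le_mul_sq_sub_sq {X H γ c : ℝ} (hγ : 0 < γ) (hH : γ ≤ H) (hc : 0 ≤ c)
    (hX : X ≤ c * (H ^ 2 - γ ^ 2)) : X / H ^ 2 ≤ 2 * c / γ * (H - γ) := by
  have hH0 : 0 < H := hγ.trans_le hH
  rw [div_le_iff₀ (by positivity), div_mul_eq_mul_div, div_mul_eq_mul_div, le_div_iff₀ hγ]
  have : (H ^ 2 - γ ^ 2) ≤ 2 * H * (H - γ) := by nlinarith
  nlinarith [mul_le_mul_of_nonneg_left this hc, mul_nonneg hc (sub_nonneg.2 hH)]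

structure IsLambdaSystem (Λ t₀ : ℝ) (H H' s h ρ S : ℝ → ℝ) : Prop where
  cosmological_pos : 0 < Λ
  hasDerivAt : ∀ t ∈ Ici t₀, HasDerivAt H (H' t) t
  shear_nonneg : ∀ t ∈ Ici t₀, 0 ≤ s t
  density_nonneg : ∀ t ∈ Ici t₀, 0 ≤ ρ t
  stress_bounds : ∀ t ∈ Ici t₀, 0 ≤ S t ∧ S t ≤ ρ t
  raychaudhuri : ∀ t ∈ Ici t₀,
    H' t = -(H t) ^ 2 - s t / 3 - (ρ t + S t + (h t) ^ 2 - 2 * Λ) / 6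
  constraint : ∀ t ∈ Ici t₀, ρ t + (h t) ^ 2 / 2 + Λ = 3 * (H t) ^ 2 - s t / 2
  hubble_pos : 0 < H t₀

namespace IsLambdaSystem

variable {Λ t₀ t : ℝ} {H H' s h ρ S : ℝ → ℝ}

theorem div_three_le_sq (sys : IsLambdaSystem Λ t₀ H H' s h ρ S) (ht : t ∈ Ici t₀) :
    Λ / 3 ≤ H t ^ 2 := by
  linarith [sys.constraint t ht, sys.shear_nonneg t ht, sys.density_nonneg t ht, sq_nonneg (h t)]

theorem shear_le (sys : IsLambdaSystem Λ t₀ H H' s h ρ S) (ht : t ∈ Ici t₀) :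
    s t ≤ 6 * (H t ^ 2 - Λ / 3) := by
  linarith [sys.constraint t ht, sys.density_nonneg t ht, sq_nonneg (h t)]

theorem sq_magnetic_le (sys : IsLambdaSystem Λ t₀ H H' s h ρ S) (ht : t ∈ Ici t₀) :
    h t ^ 2 ≤ 6 * (H t ^ 2 - Λ / 3) := by
  linarith [sys.constraint t ht, sys.shear_nonneg t ht, sys.density_nonneg t ht]

theorem deriv_le (sys : IsLambdaSystem Λ t₀ H H' s h ρ S) (ht : t ∈ Ici t₀) :
    H' t ≤ -(3 / 2) * (H t ^ 2 - Λ / 3) := by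
  linarith [sys.raychaudhuri t ht, sys.constraint t ht, sys.shear_nonneg t ht,
    (sys.stress_bounds t ht).1, sq_nonneg (h t)]

theorem neg_deriv_le (sys : IsLambdaSystem Λ t₀ H H' s h ρ S) (ht : t ∈ Ici t₀) :
    -H' t ≤ 3 * (H t ^ 2 - Λ / 3) := by
  linarith [sys.raychaudhuri t ht, sys.constraint t ht, sys.density_nonneg t ht,
    (sys.stress_bounds t ht).2, sq_nonneg (h t)]

theorem sqrt_le_hubble (sys : IsLambdaSystem Λ t₀ H H' s h ρ S) (ht : t ∈ Ici t₀) :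
    √(Λ / 3) ≤ H t := by
  have hΛ : 0 < Λ / 3 := div_pos sys.cosmological_pos three_pos
  refine le_of_sq_le_sq_of_continuousOn
    (fun t ht => (sys.hasDerivAt t ht).continuousAt.continuousWithinAt) sys.hubble_pos
    (sqrt_pos.2 hΛ) (fun _ ht => ?_) t ht
  rw [sq_sqrt hΛ.le]
  exact sys.div_three_le_sq ht

theorem exists_hubble_sub_le (sys : IsLambdaSystem Λ t₀ H H' s h ρ S) :
    ∃ C, 0 ≤ C ∧ ∀ t ∈ Ici t₀, H t - √(Λ / 3) ≤ C * exp (-2 * √(Λ / 3) * t) := by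
  set γ := √(Λ / 3)
  have hγ_sq : γ ^ 2 = Λ / 3 := sq_sqrt (div_pos sys.cosmological_pos three_pos).le
  have hdecay := le_mul_exp_of_hasDerivAt_le_mul (K := -2 * γ)
    (fun t ht => (sys.hasDerivAt t ht).sub_const γ) fun t ht => by
      nlinarith [sys.deriv_le ht, sys.sqrt_le_hubble ht, sqrt_nonneg (Λ / 3)]
  refine ⟨(H t₀ - γ) / exp (-2 * γ * t₀),
    div_nonneg (sub_nonneg.2 (sys.sqrt_le_hubble self_mem_Ici)) (exp_pos _).le, fun t ht => ?_⟩
  convert hdecay t ht using 1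
  rw [mul_sub, exp_sub]
  ring

theorem div_sq_hubble_le (sys : IsLambdaSystem Λ t₀ H H' s h ρ S) (ht : t ∈ Ici t₀) {X : ℝ}
    (hX : X ≤ 6 * (H t ^ 2 - Λ / 3)) : X / H t ^ 2 ≤ 12 / √(Λ / 3) * (H t - √(Λ / 3)) := by
  have hΛ : 0 < Λ / 3 := div_pos sys.cosmological_pos three_pos
  refine (div_sq_le_of_le_mul_sq_sub_sq (c := 6) (sqrt_pos.2 hΛ) (sys.sqrt_le_hubble ht)
    (by norm_num) (by rwa [sq_sqrt hΛ.le])).trans_eq ?_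
  norm_num

end IsLambdaSystem

theorem lambda_system_de_sitter_asymptotics_general
    (Λ t₀ : ℝ) (hΛ : 0 < Λ)
    (H H' s h ρ S : ℝ → ℝ)
    (hH_deriv : ∀ t ∈ Ici t₀, HasDerivAt H (H' t) t)
    (hs_nonneg : ∀ t ∈ Ici t₀, 0 ≤ s t)
    (hρ_nonneg : ∀ t ∈ Ici t₀, 0 ≤ ρ t)
    (hS_bounds : ∀ t ∈ Ici t₀, 0 ≤ S t ∧ S t ≤ ρ t)
    (hray : ∀ t ∈ Ici t₀,
      H' t = -(H t) ^ 2 - s t / 3 - (ρ t + S t + (h t) ^ 2 - 2 * Λ) / 6)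
    (hconstraint : ∀ t ∈ Ici t₀,
      ρ t + (h t) ^ 2 / 2 + Λ = 3 * (H t) ^ 2 - s t / 2)
    (hH_init : 0 < H t₀) :
    ∃ C : ℝ, 0 ≤ C ∧ ∀ t ∈ Ici t₀,
      (0 ≤ H t - Real.sqrt (Λ / 3) ∧
        H t - Real.sqrt (Λ / 3) ≤ C * Real.exp (-2 * Real.sqrt (Λ / 3) * t)) ∧
      s t / (H t) ^ 2 ≤ C * Real.exp (-2 * Real.sqrt (Λ / 3) * t) ∧
      (h t) ^ 2 / (H t) ^ 2 ≤ C * Real.exp (-2 * Real.sqrt (Λ / 3) * t) ∧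
      |(-1 - H' t / (H t) ^ 2) + 1| ≤ C * Real.exp (-2 * Real.sqrt (Λ / 3) * t) := by
  have sys : IsLambdaSystem Λ t₀ H H' s h ρ S :=
    ⟨hΛ, hH_deriv, hs_nonneg, hρ_nonneg, hS_bounds, hray, hconstraint, hH_init⟩
  obtain ⟨C₀, hC₀, hdecay⟩ := sys.exists_hubble_sub_le
  set γ := √(Λ / 3)
  refine ⟨(1 + 12 / γ) * C₀, by positivity, fun t ht => ?_⟩
  have hHt : γ ≤ H t := sys.sqrt_le_hubble ht
  have hCE : 0 ≤ C₀ * exp (-2 * γ * t) := by positivity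
  have hslack : 0 ≤ 12 / γ * (C₀ * exp (-2 * γ * t)) := by positivity
  have hratio : ∀ X, X ≤ 6 * (H t ^ 2 - Λ / 3) →
      X / H t ^ 2 ≤ (1 + 12 / γ) * C₀ * exp (-2 * γ * t) := fun X hX =>
    calc X / H t ^ 2 ≤ 12 / γ * (H t - γ) := sys.div_sq_hubble_le ht hX
      _ ≤ 12 / γ * (C₀ * exp (-2 * γ * t)) := by gcongr; exact hdecay t ht
      _ ≤ (1 + 12 / γ) * C₀ * exp (-2 * γ * t) := by linarith
  have hH'_nonpos : H' t ≤ 0 := by linarith [sys.deriv_le ht, sys.div_three_le_sq ht]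
  refine ⟨⟨sub_nonneg.2 hHt, by linarith [hdecay t ht]⟩, hratio _ (sys.shear_le ht),
    hratio _ (sys.sq_magnetic_le ht), ?_⟩
  rw [show (-1 - H' t / H t ^ 2) + 1 = -H' t / H t ^ 2 by ring,
    abs_of_nonneg (div_nonneg (neg_nonneg.2 hH'_nonpos) (sq_nonneg _))]
  exact hratio _ (by linarith [sys.neg_deriv_le ht, sys.div_three_le_sq ht])

/-- De Sitter-like late time asymptotics for the Bianchi I Einstein–Vlasov
system with a pure magnetic field and a positive cosmological constant `Λ`:
`H → √(Λ/3)`, the Hubble-normalised shear scalar `s/H²` and magnetic field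
squared `h²/H²` decay like `e^{-2√(Λ/3)t}`, and the deceleration parameter
`q = -1 - H'/H²` tends to `-1` at the same rate. -/
theorem lambda_system_de_sitter_asymptotics
    (Λ t₀ : ℝ) (hΛ : 0 < Λ)
    (H H' s h ρ S : ℝ → ℝ)
    (hH_deriv : ∀ t ∈ Ici t₀, HasDerivAt H (H' t) t)
    (hH'_cont : ContinuousOn H' (Ici t₀))
    (hs_cont : ContinuousOn s (Ici t₀)) (hh_cont : ContinuousOn h (Ici t₀))
    (hρ_cont : ContinuousOn ρ (Ici t₀)) (hS_cont : ContinuousOn S (Ici t₀))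
    (hs_nonneg : ∀ t ∈ Ici t₀, 0 ≤ s t)
    (hρ_nonneg : ∀ t ∈ Ici t₀, 0 ≤ ρ t)
    (hS_bounds : ∀ t ∈ Ici t₀, 0 ≤ S t ∧ S t ≤ ρ t)
    (hray : ∀ t ∈ Ici t₀,
      H' t = -(H t) ^ 2 - s t / 3 - (ρ t + S t + (h t) ^ 2 - 2 * Λ) / 6)
    (hconstraint : ∀ t ∈ Ici t₀,
      ρ t + (h t) ^ 2 / 2 + Λ = 3 * (H t) ^ 2 - s t / 2)
    (hH_init : 0 < H t₀) :
    ∃ C : ℝ, 0 ≤ C ∧ ∀ t ∈ Ici t₀,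
      (0 ≤ H t - Real.sqrt (Λ / 3) ∧
        H t - Real.sqrt (Λ / 3) ≤ C * Real.exp (-2 * Real.sqrt (Λ / 3) * t)) ∧
      s t / (H t) ^ 2 ≤ C * Real.exp (-2 * Real.sqrt (Λ / 3) * t) ∧
      (h t) ^ 2 / (H t) ^ 2 ≤ C * Real.exp (-2 * Real.sqrt (Λ / 3) * t) ∧
      |(-1 - H' t / (H t) ^ 2) + 1| ≤ C * Real.exp (-2 * Real.sqrt (Λ / 3) * t) :=
  lambda_system_de_sitter_asymptotics_general Λ t₀ hΛ H H' s h ρ S hH_deriv hs_nonneg hρ_nonneg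
    hS_bounds hray hconstraint hH_init
end
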